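/- arXiv:math/9809098 — 10 statements merged into one kernel-verified Lean document; each statement's English description precedes it below -/
import Mathlib

section
/- Let f : X → A be a bounded continuous function with f(x) ∈ A⁺ for every x ∈ X, and suppose there is a constant K ≥ 0 such that ‖∫ λ(x) f(x) dμ(x)‖ ≤ K for every λ ∈ ℬ(X). Then for every positive linear functional ω on A, the function x ↦ ω(f(x)) is μ-integrable on X and ∫ ω(f(x)) dμ(x) ≤ ‖ω‖·K. -/
/-!
Testing the hypothesis on indicators of compact sets gives `∫_k ω ∘ f ≤ ‖ω‖ K` on every compact
`k`. For a regular measure this bound passes from compacts to the whole space, for any bounded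
lower semicontinuous `h ≥ 0`: the superlevel sets `{h > 1/n}` are open, so by inner regularity and
Chebyshev's inequality on compacts they have finite measure; on a set of finite measure a compact
subset carries all of `∫ h` up to `ε` because `h` is bounded; and these superlevel sets increase
to the support of `h`.
-/

open MeasureTheory
open scoped ComplexOrder ENNReal

section CompactExhaustion

variable {X : Type*} [TopologicalSpace X] [T2Space X] [MeasurableSpace X] [OpensMeasurableSpace X]
  {μ : Measure X} {h : X → ℝ≥0∞} {M : ℝ≥0∞}

theorem mul_measure_lt_le_of_forall_isCompact [μ.Regular] (hh : LowerSemicontinuous h)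
    (hM : ∀ k, IsCompact k → ∫⁻ x in k, h x ∂μ ≤ M) (t : ℝ≥0∞) :
    t * μ {x | t < h x} ≤ M := by
  have hopen : IsOpen {x | t < h x} := hh.isOpen_preimage t
  rw [hopen.measure_eq_iSup_isCompact μ]
  simp only [ENNReal.mul_iSup, iSup_le_iff]
  intro k hkV hk
  calc t * μ k = ∫⁻ _ in k, t ∂μ := (setLIntegral_const k t).symm
    _ ≤ ∫⁻ x in k, h x ∂μ := setLIntegral_mono' hk.measurableSet fun x hx => (hkV hx).le
    _ ≤ M := hM k hk

theorem measure_lt_ne_top_of_forall_isCompact [μ.Regular] (hh : LowerSemicontinuous h)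
    (hM : ∀ k, IsCompact k → ∫⁻ x in k, h x ∂μ ≤ M) (hM_top : M ≠ ∞) {t : ℝ≥0∞} (ht : t ≠ 0) :
    μ {x | t < h x} ≠ ∞ := by
  intro hμ
  have := mul_measure_lt_le_of_forall_isCompact hh hM t
  rw [hμ, ENNReal.mul_top ht, top_le_iff] at this
  exact hM_top this

theorem setLIntegral_le_of_forall_isCompact [μ.InnerRegularCompactLTTop] {B : ℝ≥0∞}
    (hB : B ≠ ∞) (hhB : ∀ x, h x ≤ B) (hM : ∀ k, IsCompact k → ∫⁻ x in k, h x ∂μ ≤ M)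
    {s : Set X} (hs : MeasurableSet s) (hμs : μ s ≠ ∞) : ∫⁻ x in s, h x ∂μ ≤ M := by
  refine ENNReal.le_of_forall_pos_le_add fun ε hε _ => ?_
  have hδ : (ε : ℝ≥0∞) / (B + 1) ≠ 0 := by simp [ENNReal.div_eq_zero_iff, hε.ne', hB]
  obtain ⟨k, hks, hk, hsk⟩ := hs.exists_isCompact_sdiff_lt hμs hδ
  calc ∫⁻ x in s, h x ∂μ ≤ ∫⁻ x in k ∪ s \ k, h x ∂μ := by
        rw [Set.union_sdiff_cancel hks]
    _ ≤ ∫⁻ x in k, h x ∂μ + ∫⁻ x in s \ k, h x ∂μ := lintegral_union_le _ _ _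
    _ ≤ M + ε := by
      gcongr
      · exact hM k hk
      calc ∫⁻ x in s \ k, h x ∂μ ≤ ∫⁻ _ in s \ k, B ∂μ := lintegral_mono hhB
        _ = B * μ (s \ k) := setLIntegral_const _ B
        _ ≤ (B + 1) * (ε / (B + 1)) := mul_le_mul' le_self_add hsk.le
        _ = ε := ENNReal.mul_div_cancel (by simp) (by simp [hB])

theorem lintegral_le_of_forall_isCompact [μ.Regular] (hh : LowerSemicontinuous h) {B : ℝ≥0∞}
    (hB : B ≠ ∞) (hhB : ∀ x, h x ≤ B)
    (hM : ∀ k, IsCompact k → ∫⁻ x in k, h x ∂μ ≤ M) : ∫⁻ x, h x ∂μ ≤ M := by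
  rcases eq_or_ne M ∞ with rfl | hM_top
  · exact le_top
  set V : ℕ → Set X := fun n => {x | (n : ℝ≥0∞)⁻¹ < h x}
  have hV_mono : Monotone V := fun m n hmn x (hx : _ < _) =>
    lt_of_le_of_lt (ENNReal.inv_le_inv.2 (by exact_mod_cast hmn)) hx
  have hsupp : Function.support h ⊆ ⋃ n, V n := fun x hx =>
    Set.mem_iUnion.2 (ENNReal.exists_inv_nat_lt hx)
  rw [← setLIntegral_eq_of_support_subset hsupp,
    setLIntegral_iUnion_of_directed _ hV_mono.directed_le]
  refine iSup_le fun n => setLIntegral_le_of_forall_isCompact hB hhB hM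
    (hh.isOpen_preimage _).measurableSet ?_
  exact measure_lt_ne_top_of_forall_isCompact hh hM hM_top (by simp)

end CompactExhaustion

theorem enorm_integral_of_nonneg {α : Type*} [MeasurableSpace α] {μ : Measure α} {F : α → ℂ}
    (hF : ∀ x, 0 ≤ F x) (hFi : Integrable F μ) : ‖∫ x, F x ∂μ‖ₑ = ∫⁻ x, ‖F x‖ₑ ∂μ := by
  refine le_antisymm (enorm_integral_le_lintegral_enorm F) ?_
  have hre : ∀ x, (F x).re = ‖F x‖ := fun x => Complex.re_eq_norm.2 (hF x)
  calc ∫⁻ x, ‖F x‖ₑ ∂μ = ∫⁻ x, ENNReal.ofReal (F x).re ∂μ := by simp_rw [hre, ofReal_norm]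
    _ = ENNReal.ofReal (∫ x, (F x).re ∂μ) :=
      (ofReal_integral_eq_lintegral_ofReal hFi.re (ae_of_all _ fun x => by simp [hre])).symm
    _ = ENNReal.ofReal (∫ x, F x ∂μ).re := congrArg _ (integral_re hFi)
    _ ≤ ‖∫ x, F x ∂μ‖ₑ := by
      rw [← ofReal_norm]
      exact ENNReal.ofReal_le_ofReal (Complex.re_le_norm _)

theorem norm_setIntegral_le_of_forall_indicator {X E : Type*} [TopologicalSpace X] [T2Space X]
    [MeasurableSpace X] [OpensMeasurableSpace X] {μ : Measure X} [NormedAddCommGroup E]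
    [NormedSpace ℂ E] {f : X → E} {K : ℝ}
    (hbound : ∀ lam : X → ℝ, Measurable lam → HasCompactSupport lam →
      (∀ x, 0 ≤ lam x) → (∀ x, lam x ≤ 1) → ‖∫ x, (lam x : ℂ) • f x ∂μ‖ ≤ K)
    {k : Set X} (hk : IsCompact k) : ‖∫ x in k, f x ∂μ‖ ≤ K := by
  have hind : (fun x => ((k.indicator 1 x : ℝ) : ℂ) • f x) = k.indicator f := by
    ext x
    by_cases hx : x ∈ k <;> simp [hx]
  have := hbound (k.indicator 1) (measurable_one.indicator hk.measurableSet)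
    (HasCompactSupport.intro hk fun x hx => Set.indicator_of_notMem hx _)
    (Set.indicator_nonneg fun _ _ => zero_le_one) (Set.indicator_le_self' fun _ _ => zero_le_one)
  rwa [hind, integral_indicator hk.measurableSet] at this

theorem stmt0_general
    {X : Type*} [TopologicalSpace X] [T2Space X]
    [MeasurableSpace X] [BorelSpace X]
    (μ : Measure X) [μ.Regular]
    {A : Type*} [NonUnitalCStarAlgebra A] [PartialOrder A] [StarOrderedRing A]
    (f : X → A) (hf : Continuous f) (hfb : ∃ C : ℝ, ∀ x, ‖f x‖ ≤ C)
    (hfpos : ∀ x, 0 ≤ f x)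
    (K : ℝ) (hK : 0 ≤ K)
    (hbound : ∀ lam : X → ℝ, Measurable lam → HasCompactSupport lam →
      (∀ x, 0 ≤ lam x) → (∀ x, lam x ≤ 1) →
      ‖∫ x, (lam x : ℂ) • f x ∂μ‖ ≤ K)
    (ω : A →L[ℂ] ℂ) (hω : ∀ a : A, 0 ≤ a → 0 ≤ ω a) :
    Integrable (fun x => ω (f x)) μ ∧ ‖∫ x, ω (f x) ∂μ‖ ≤ ‖ω‖ * K := by
  obtain ⟨C, hC⟩ := hfb
  have hωf : Continuous fun x => ω (f x) := ω.continuous.comp hf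
  have hωf_pos : ∀ x, 0 ≤ ω (f x) := fun x => hω _ (hfpos x)
  have hωf_le : ∀ x, ‖ω (f x)‖ₑ ≤ ‖ω‖ₑ * ENNReal.ofReal C := fun x => by
    grw [ω.le_opENorm, ← ofReal_norm (f x), hC x]
  have hcompact : ∀ k, IsCompact k → ∫⁻ x in k, ‖ω (f x)‖ₑ ∂μ ≤ ‖ω‖ₑ * ENNReal.ofReal K := by
    intro k hk
    rw [← enorm_integral_of_nonneg hωf_pos (hωf.continuousOn.integrableOn_compact hk),
      ω.integral_comp_comm (hf.continuousOn.integrableOn_compact hk)]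
    grw [ω.le_opENorm, ← ofReal_norm (∫ x in k, f x ∂μ),
      norm_setIntegral_le_of_forall_indicator hbound hk]
  have hlintegral : ∫⁻ x, ‖ω (f x)‖ₑ ∂μ ≤ ‖ω‖ₑ * ENNReal.ofReal K :=
    lintegral_le_of_forall_isCompact (continuous_enorm.comp hωf).lowerSemicontinuous
      (by finiteness) hωf_le hcompact
  have hint : Integrable (fun x => ω (f x)) μ :=
    ⟨hωf.aestronglyMeasurable, hlintegral.trans_lt (by finiteness)⟩
  refine ⟨hint, ?_⟩
  have := (enorm_integral_of_nonneg hωf_pos hint).trans_le hlintegral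
  rwa [← ofReal_norm, ← ofReal_norm, ← ENNReal.ofReal_mul (norm_nonneg _),
    ENNReal.ofReal_le_ofReal_iff (mul_nonneg (norm_nonneg _) hK)] at this

/-- Let `A` be a C*-algebra, `X` a locally compact Hausdorff space with a
positive Radon measure `μ`.  If `f : X → A` is a bounded continuous function with positive
values and there is `K ≥ 0` with `‖∫ λ(x) f(x) dμ(x)‖ ≤ K` for every `λ ∈ ℬ(X)` (bounded
measurable compactly supported, `0 ≤ λ ≤ 1`), then for every positive linear functional `ω`
on `A` the function `x ↦ ω (f x)` is integrable with `∫ ω (f x) dμ ≤ ‖ω‖ * K`. -/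
theorem stmt0
    {X : Type*} [TopologicalSpace X] [LocallyCompactSpace X] [T2Space X]
    [MeasurableSpace X] [BorelSpace X]
    (μ : Measure X) [μ.Regular]
    {A : Type*} [NonUnitalCStarAlgebra A] [PartialOrder A] [StarOrderedRing A]
    (f : X → A) (hf : Continuous f) (hfb : ∃ C : ℝ, ∀ x, ‖f x‖ ≤ C)
    (hfpos : ∀ x, 0 ≤ f x)
    (K : ℝ) (hK : 0 ≤ K)
    (hbound : ∀ lam : X → ℝ, Measurable lam → HasCompactSupport lam →
      (∀ x, 0 ≤ lam x) → (∀ x, lam x ≤ 1) →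
      ‖∫ x, (lam x : ℂ) • f x ∂μ‖ ≤ K)
    (ω : A →L[ℂ] ℂ) (hω : ∀ a : A, 0 ≤ a → 0 ≤ ω a) :
    Integrable (fun x => ω (f x)) μ ∧ ‖∫ x, ω (f x) ∂μ‖ ≤ ‖ω‖ * K :=
  stmt0_general μ f hf hfb hfpos K hK hbound ω hω
end

section
/- Suppose G is not compact. Let ω be an α-invariant state on A, and let a ∈ A⁺ be such that there is a constant K with ‖p_λ(a)‖ ≤ K for every λ ∈ ℬ(G). Then ω(a) = 0. -/
open MeasureTheory
open scoped ComplexOrder Pointwise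

/-!
If `λ` is the indicator of a compact set `L`, invariance of `ω` gives
`ω (p_λ a) = μ(L) • ω a`, hence `μ(L) ‖ω a‖ ≤ ‖ω‖ K`. In a noncompact group one can keep adjoining
to a compact set a disjoint translate of a fixed compact neighbourhood of `1`, so there are compact
sets of arbitrarily large Haar measure, and this forces `ω a = 0`.
-/

section Noncompact

variable {G : Type*} [Group G] [TopologicalSpace G] [IsTopologicalGroup G] [NoncompactSpace G]
  [MeasurableSpace G] [BorelSpace G] (μ : Measure G) [μ.IsMulLeftInvariant]

lemma exists_isCompact_isClosed_nsmul_measure_le {K : Set G} (hK : IsCompact K)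
    (hK' : IsClosed K) (n : ℕ) : ∃ L : Set G, IsCompact L ∧ IsClosed L ∧ n * μ K ≤ μ L := by
  induction n with
  | zero => exact ⟨∅, isCompact_empty, isClosed_empty, by simp⟩
  | succ n ih =>
    obtain ⟨L, hL, hL', hμL⟩ := ih
    obtain ⟨g, hg⟩ := exists_disjoint_smul_of_isCompact hL hK
    refine ⟨L ∪ g • K, hL.union (hK.smul g), hL'.union (hK'.smul g), ?_⟩
    rw [measure_union hg (hK'.smul g).measurableSet, measure_smul, Nat.cast_succ, add_one_mul]
    gcongr

lemma exists_isCompact_isClosed_lt_measureReal [LocallyCompactSpace G] [μ.IsOpenPosMeasure]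
    [IsFiniteMeasureOnCompacts μ] (r : ℝ) :
    ∃ L : Set G, IsCompact L ∧ IsClosed L ∧ r < μ.real L := by
  obtain ⟨K, hK1, hK, hK'⟩ := exists_mem_nhds_isCompact_isClosed (1 : G)
  have hμK : 0 < μ.real K :=
    ENNReal.toReal_pos (μ.measure_pos_of_mem_nhds hK1).ne' hK.measure_lt_top.ne
  obtain ⟨n, hn⟩ := exists_nat_gt (r / μ.real K)
  obtain ⟨L, hL, hL', hμL⟩ := exists_isCompact_isClosed_nsmul_measure_le μ hK hK' n
  refine ⟨L, hL, hL', ?_⟩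
  calc r < n * μ.real K := (div_lt_iff₀ hμK).1 hn
    _ ≤ μ.real L := by
      rw [Measure.real, Measure.real, ← ENNReal.toReal_natCast, ← ENNReal.toReal_mul]
      exact ENNReal.toReal_mono hL.measure_lt_top.ne hμL

end Noncompact

lemma measureReal_mul_norm_le_norm_setIntegral {X E : Type*} [TopologicalSpace X]
    [MeasurableSpace X] [OpensMeasurableSpace X] {μ : Measure X} [IsFiniteMeasureOnCompacts μ]
    [NormedAddCommGroup E] [NormedSpace ℂ E] [CompleteSpace E]
    {f : X → E} (hf : Continuous f) (ω : E →L[ℂ] ℂ) {c : ℂ} (hωf : ∀ x, ω (f x) = c)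
    {L : Set X} (hL : IsCompact L) (hL' : IsClosed L) :
    μ.real L * ‖c‖ ≤ ‖ω‖ * ‖∫ x in L, f x ∂μ‖ := by
  have hint : IntegrableOn f L μ := hf.continuousOn.integrableOn_compact' hL hL'.measurableSet
  calc μ.real L * ‖c‖ = ‖ω (∫ x in L, f x ∂μ)‖ := by
        rw [← ω.integral_comp_comm hint]
        simp [hωf, abs_of_nonneg measureReal_nonneg]
    _ ≤ ‖ω‖ * ‖∫ x in L, f x ∂μ‖ := ω.le_opNorm _

theorem stmt1_general
    {G : Type*} [Group G] [TopologicalSpace G] [IsTopologicalGroup G]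
    [LocallyCompactSpace G] [MeasurableSpace G] [BorelSpace G]
    (μ : Measure G) [μ.IsHaarMeasure]
    (hG : ¬ IsCompact (Set.univ : Set G))
    {A : Type*} [NonUnitalCStarAlgebra A]
    (α : G → (A ≃⋆ₐ[ℂ] A))
    (hα : ∀ a : A, Continuous fun x => α x a)
    (ω : A →L[ℂ] ℂ)
    (hωinv : ∀ (x : G) (a : A), ω (α x a) = ω a)
    (a : A)
    (K : ℝ)
    (hK : ∀ lam : G → ℝ, Measurable lam → HasCompactSupport lam →
      (∀ x, 0 ≤ lam x) → (∀ x, lam x ≤ 1) →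
      ‖∫ x, (lam x : ℂ) • (α x a) ∂μ‖ ≤ K) :
    ω a = 0 := by
  have : NoncompactSpace G := ⟨hG⟩
  have hbound (L : Set G) (hL : IsCompact L) (hL' : IsClosed L) : μ.real L * ‖ω a‖ ≤ ‖ω‖ * K := by
    have hp : ∫ x, ((L.indicator 1 x : ℝ) : ℂ) • α x a ∂μ = ∫ x in L, α x a ∂μ := by
      rw [← integral_indicator hL'.measurableSet]
      congr 1 with x
      by_cases hx : x ∈ L <;> simp [hx]
    calc μ.real L * ‖ω a‖ ≤ ‖ω‖ * ‖∫ x in L, α x a ∂μ‖ :=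
          measureReal_mul_norm_le_norm_setIntegral (hα a) ω (hωinv · a) hL hL'
      _ ≤ ‖ω‖ * K := by
        rw [← hp]
        gcongr
        exact hK _ (measurable_one.indicator hL'.measurableSet)
          (.intro' hL hL' fun _ hx => Set.indicator_of_notMem hx _)
          (Set.indicator_nonneg (by simp)) (Set.indicator_le_self' (by simp))
  by_contra hne
  have hωa : 0 < ‖ω a‖ := norm_pos_iff.mpr hne
  obtain ⟨L, hL, hL', hμL⟩ := exists_isCompact_isClosed_lt_measureReal μ (‖ω‖ * K / ‖ω a‖)
  exact (hbound L hL hL').not_gt ((div_lt_iff₀ hωa).mp hμL)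

/-- If `G` is not compact, `α` is a strongly continuous action of `G` on a
C*-algebra `A`, `ω` is an `α`-invariant state on `A`, and `a ∈ A⁺` satisfies
`‖p_λ(a)‖ ≤ K` for all `λ ∈ ℬ(G)`, then `ω(a) = 0`. -/
theorem stmt1
    {G : Type*} [Group G] [TopologicalSpace G] [IsTopologicalGroup G]
    [LocallyCompactSpace G] [MeasurableSpace G] [BorelSpace G]
    (μ : Measure G) [μ.IsHaarMeasure]
    (hG : ¬ IsCompact (Set.univ : Set G))
    {A : Type*} [NonUnitalCStarAlgebra A] [PartialOrder A] [StarOrderedRing A]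
    (α : G → (A ≃⋆ₐ[ℂ] A))
    (hone : ∀ a : A, α 1 a = a)
    (hmul : ∀ (x y : G) (a : A), α (x * y) a = α x (α y a))
    (hα : ∀ a : A, Continuous fun x => α x a)
    (ω : A →L[ℂ] ℂ) (hωpos : ∀ a : A, 0 ≤ a → 0 ≤ ω a) (hωnorm : ‖ω‖ = 1)
    (hωinv : ∀ (x : G) (a : A), ω (α x a) = ω a)
    (a : A) (ha : 0 ≤ a)
    (K : ℝ)
    (hK : ∀ lam : G → ℝ, Measurable lam → HasCompactSupport lam →
      (∀ x, 0 ≤ lam x) → (∀ x, lam x ≤ 1) →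
      ‖∫ x, (lam x : ℂ) • (α x a) ∂μ‖ ≤ K) :
    ω a = 0 :=
  stmt1_general μ hG α hα ω hωinv a K hK
end

section
/- Suppose that for every continuous compactly supported function f : M → ℝ with f ≥ 0 and every m ∈ M, the function x ↦ f(x⁻¹•m) is integrable on G with respect to left Haar measure. Then every G-orbit in M is closed in M, and the stabilizer subgroup {x ∈ G : x•m = m} of every point m ∈ M is compact. -/
open MeasureTheory Set Topology
open scoped Pointwise ENNReal

/-!
The integrability hypothesis, tested on a bump function equal to `1` on a compact `K ⊆ M`, says
that `{x | x⁻¹ • m ∈ K}` has finite Haar measure, and so does its thickening by a compact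
neighbourhood `V` of `1`, which lies in `{x | x⁻¹ • m ∈ V⁻¹ • K}`. A closed non-compact set `E`
contains a sequence whose translates of `V` are pairwise disjoint, so `E * V` has infinite
measure; hence these preimages are compact and the orbit map `x ↦ x • m` is proper. A proper map
into a locally compact Hausdorff space has closed range, the orbit, and compact fibres, such as
the stabilizer.
-/

section Group

variable {G : Type*} [Group G] [TopologicalSpace G] [IsTopologicalGroup G]

theorem exists_seq_mem_pairwise_disjoint_smul {E V : Set G} (hE : IsClosed E)
    (hEc : ¬IsCompact E) (hV : IsCompact V) :
    ∃ u : ℕ → G, (∀ n, u n ∈ E) ∧ Pairwise (Function.onFun Disjoint fun n => u n • V) := by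
  have : Std.Symm fun x y : G => Disjoint (x • V) (y • V) := ⟨fun _ _ h => h.symm⟩
  refine exists_seq_of_forall_finset_exists' (· ∈ E) (fun x y => Disjoint (x • V) (y • V)) ?_
  intro s _
  have hW : IsCompact (⋃ x ∈ s, x • (V * V⁻¹)) :=
    s.isCompact_biUnion fun x _ => (hV.mul hV.inv).smul x
  obtain ⟨y, hyE, hyW⟩ : ∃ y ∈ E, y ∉ ⋃ x ∈ s, x • (V * V⁻¹) :=
    not_subset.mp fun hsub => hEc (hW.of_isClosed_subset hE hsub)
  -- `y • V` meets `x • V` only if `y ∈ x • (V * V⁻¹)`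
  refine ⟨y, hyE, fun x hx => Set.disjoint_left.mpr ?_⟩
  rintro _ ⟨v, hv, rfl⟩ ⟨w, hw, hwv⟩
  refine hyW (mem_biUnion hx ⟨v * w⁻¹, mul_mem_mul hv (inv_mem_inv.mpr hw), ?_⟩)
  simp only [smul_eq_mul] at hwv ⊢
  rw [← mul_assoc, ← hwv, mul_inv_cancel_right]

variable [MeasurableSpace G] [BorelSpace G] (μ : Measure G) [μ.IsMulLeftInvariant]
  [μ.IsOpenPosMeasure]

theorem measure_iUnion_smul_eq_top {U : Set G} (hU : IsOpen U) (hne : U.Nonempty) {u : ℕ → G}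
    (hu : Pairwise (Function.onFun Disjoint fun n => u n • U)) : μ (⋃ n, u n • U) = ∞ := by
  rw [measure_iUnion hu fun n => (hU.smul (u n)).measurableSet]
  simp only [measure_smul]
  exact ENNReal.tsum_const_eq_top_of_ne_zero (hU.measure_ne_zero μ hne)

theorem IsClosed.isCompact_of_measure_mul_ne_top {E V : Set G} (hE : IsClosed E)
    (hV : V ∈ 𝓝 1) (hVc : IsCompact V) (hfin : μ (E * V) ≠ ∞) : IsCompact E := by
  by_contra hEc
  obtain ⟨u, huE, hdisj⟩ := exists_seq_mem_pairwise_disjoint_smul hE hEc hVc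
  have hdisj' : Pairwise (Function.onFun Disjoint fun n => u n • interior V) :=
    hdisj.mono fun _ _ h => h.mono (smul_set_mono interior_subset) (smul_set_mono interior_subset)
  have hsub : ⋃ n, u n • interior V ⊆ E * V :=
    iUnion_subset fun n => (smul_set_mono interior_subset).trans (smul_set_subset_mul (huE n))
  exact hfin (measure_mono_top hsub (measure_iUnion_smul_eq_top μ isOpen_interior
    ⟨1, mem_interior_iff_mem_nhds.mpr hV⟩ hdisj'))

end Group

section Action

variable {G : Type*} [Group G] [MeasurableSpace G] (μ : Measure G)
  {M : Type*} [TopologicalSpace M] [T2Space M] [MulAction G M]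

theorem measure_inv_smul_mem_ne_top [LocallyCompactSpace M]
    (h : ∀ f : M → ℝ, Continuous f → HasCompactSupport f → (∀ m, 0 ≤ f m) →
      ∀ m : M, Integrable (fun x : G => f (x⁻¹ • m)) μ)
    (m : M) {K : Set M} (hK : IsCompact K) : μ {x : G | x⁻¹ • m ∈ K} ≠ ∞ := by
  obtain ⟨f, hfK, -, hfc, hf01⟩ :=
    exists_continuous_one_zero_of_isCompact hK isClosed_empty (disjoint_empty K)
  have hint := h f f.continuous hfc (fun y => (hf01 y).1) m
  have hsub : {x : G | x⁻¹ • m ∈ K} ⊆ {x | 1 ≤ f (x⁻¹ • m)} := fun _ hx => (hfK hx).symm.le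
  exact ne_top_of_le_ne_top (hint.measure_ge_lt_top one_pos).ne (measure_mono hsub)

variable [TopologicalSpace G] [IsTopologicalGroup G] [LocallyCompactSpace G] [BorelSpace G]
  [μ.IsMulLeftInvariant] [μ.IsOpenPosMeasure] [ContinuousSMul G M]

theorem isCompact_setOf_inv_smul_mem (m : M)
    (hfin : ∀ K : Set M, IsCompact K → μ {x : G | x⁻¹ • m ∈ K} ≠ ∞)
    {K : Set M} (hK : IsCompact K) : IsCompact {x : G | x⁻¹ • m ∈ K} := by
  obtain ⟨V, hVc, hV⟩ := exists_compact_mem_nhds (1 : G)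
  have hE : IsClosed {x : G | x⁻¹ • m ∈ K} :=
    hK.isClosed.preimage (continuous_inv.smul continuous_const)
  have hEV : {x : G | x⁻¹ • m ∈ K} * V ⊆ {x : G | x⁻¹ • m ∈ V⁻¹ • K} := by
    rintro _ ⟨x, hx, v, hv, rfl⟩
    change (x * v)⁻¹ • m ∈ V⁻¹ • K
    rw [mul_inv_rev, mul_smul]
    exact smul_mem_smul (inv_mem_inv.mpr hv) hx
  exact hE.isCompact_of_measure_mul_ne_top μ hV hVc
    (ne_top_of_le_ne_top (hfin _ (hVc.inv.smul_set hK)) (measure_mono hEV))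

theorem isProperMap_smul_const_of_measure_ne_top [LocallyCompactSpace M] (m : M)
    (hfin : ∀ K : Set M, IsCompact K → μ {x : G | x⁻¹ • m ∈ K} ≠ ∞) :
    IsProperMap fun x : G => x • m := by
  refine isProperMap_iff_isCompact_preimage.mpr
    ⟨continuous_id.smul continuous_const, fun K hK => ?_⟩
  convert (isCompact_setOf_inv_smul_mem μ m hfin hK).inv using 1
  ext x
  simp only [mem_preimage, Set.mem_inv, mem_ofPred_eq, inv_inv]

end Action

/-- If for every nonnegative `f ∈ C_c(M)` and every `m ∈ M` the function
`x ↦ f(x⁻¹ • m)` is integrable on `G` (left Haar measure), then every `G`-orbit in `M` is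
closed and every stabilizer subgroup is compact. -/
theorem stmt2
    {G : Type*} [Group G] [TopologicalSpace G] [IsTopologicalGroup G]
    [LocallyCompactSpace G] [MeasurableSpace G] [BorelSpace G]
    (μ : Measure G) [μ.IsHaarMeasure]
    {M : Type*} [TopologicalSpace M] [LocallyCompactSpace M] [T2Space M]
    [MulAction G M] [ContinuousSMul G M]
    (h : ∀ f : M → ℝ, Continuous f → HasCompactSupport f → (∀ m, 0 ≤ f m) →
      ∀ m : M, Integrable (fun x : G => f (x⁻¹ • m)) μ) :
    (∀ m : M, IsClosed (MulAction.orbit G m)) ∧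
    (∀ m : M, IsCompact {x : G | x • m = m}) := by
  have hproper (m : M) : IsProperMap fun x : G => x • m :=
    isProperMap_smul_const_of_measure_ne_top μ m fun _ hK => measure_inv_smul_mem_ne_top μ h m hK
  exact ⟨fun m => (hproper m).isClosed_range,
    fun m => (hproper m).isCompact_preimage isCompact_singleton⟩
end

section
/- Let A and B be C*-algebras and let (p_λ)_{λ∈Λ} be a net, indexed by a directed set Λ, of positive linear maps from B to M(A) (positive meaning p_λ maps B⁺ into the positive cone of M(A)), which is increasing in the sense that λ ≤ μ implies p_μ(b) − p_λ(b) ≥ 0 for every b ∈ B⁺. If b ∈ B⁺ is such that the net (p_λ(b)) converges strictly to some element of M(A), then for every b₀ ∈ B with 0 ≤ b₀ ≤ b, the net (p_λ(b₀)) also converges strictly to some element of M(A). (In other words, the cone of elements of B⁺ for which the net converges strictly is hereditary.) -/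
/-!
For `l ≤ u` put `q = p_u(b₀) - p_l(b₀)` and `Q = p_u(b) - p_l(b)`, so that `0 ≤ q ≤ Q`. Then
`q² ≤ ‖q‖ q ≤ ‖Q‖ Q`, whence `‖q a‖² = ‖a⋆ q² a‖ ≤ ‖Q‖ ‖a‖ ‖Q a‖`: the strict Cauchy property of
`p_λ(b)` passes to `p_λ(b₀)` as soon as the increments `Q` are bounded. They are, because the
compressions `a⋆ Q a` increase in `u` towards `a⋆ (m - p_l(b)) a`, which gives `‖Q‖ ≤ ‖m - p_l(b)‖`.
Finally, pointwise limits of an eventually bounded net of double centralizers form a double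
centralizer, and for the self-adjoint `p_λ(b₀)` the right action is determined by the left one.
-/

open Filter Topology
open scoped MultiplierAlgebra

theorem cauchySeq_iff_eventually_forall_le_dist_lt {Λ α : Type*} [Preorder Λ]
    [IsDirected Λ (· ≤ ·)] [Nonempty Λ] [PseudoMetricSpace α] {f : Λ → α} :
    CauchySeq f ↔ ∀ ε > 0, ∀ᶠ l in atTop, ∀ u, l ≤ u → dist (f u) (f l) < ε := by
  rw [CauchySeq, Metric.cauchy_iff]
  refine ⟨fun ⟨_, h⟩ ε hε => ?_, fun h => ⟨map_neBot, fun ε hε => ?_⟩⟩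
  · obtain ⟨t, ht, hdist⟩ := h ε hε
    obtain ⟨l₀, hl₀⟩ := mem_atTop_sets.mp (mem_map.mp ht)
    filter_upwards [eventually_ge_atTop l₀] with l hl u hu
    exact hdist _ (hl₀ u (hl.trans hu)) _ (hl₀ l hl)
  · obtain ⟨l₀, hl₀⟩ := eventually_atTop.mp (h (ε / 2) (half_pos hε))
    refine ⟨f '' Set.Ici l₀, image_mem_map (Ici_mem_atTop l₀), ?_⟩
    rintro _ ⟨l, hl, rfl⟩ _ ⟨l', hl', rfl⟩
    obtain ⟨u, hlu, hl'u⟩ := directed_of (· ≤ ·) l l'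
    calc dist (f l) (f l') ≤ dist (f u) (f l) + dist (f u) (f l') := dist_triangle_left _ _ _
      _ < ε / 2 + ε / 2 := add_lt_add (hl₀ l hl u hlu) (hl₀ l' hl' u hl'u)
      _ = ε := add_halves ε

namespace CStarAlgebra

variable {E : Type*} [NonUnitalCStarAlgebra E] [PartialOrder E] [StarOrderedRing E]

theorem mul_self_le_norm_smul {q : E} (hq : 0 ≤ q) : q * q ≤ ‖q‖ • q := by
  obtain ⟨s, hs, rfl⟩ : ∃ s, IsSelfAdjoint s ∧ s * s = q :=
    ⟨CFC.sqrt q, .of_nonneg (CFC.sqrt_nonneg q), CFC.sqrt_mul_sqrt_self q⟩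
  have h := star_left_conjugate_le_norm_smul (a := s) (b := s * s)
  rw [hs.star_eq] at h
  simpa only [mul_assoc] using h

theorem norm_star_left_conjugate_le_of_le {X Y : E} (hX : 0 ≤ X) (hXY : X ≤ Y) (z : E) :
    ‖star z * X * z‖ ≤ ‖star z * Y * z‖ :=
  norm_le_norm_of_nonneg_of_le (star_left_conjugate_nonneg hX z)
    (star_left_conjugate_le_conjugate hXY z)

theorem norm_mul_sq_le_of_le {q Q : E} (hq : 0 ≤ q) (hqQ : q ≤ Q) (z : E) :
    ‖q * z‖ ^ 2 ≤ ‖Q‖ * (‖z‖ * ‖Q * z‖) := by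
  have hq' : IsSelfAdjoint q := .of_nonneg hq
  have hsq : q * q ≤ ‖q‖ • Q :=
    (mul_self_le_norm_smul hq).trans (smul_le_smul_of_nonneg_left hqQ (norm_nonneg q))
  calc ‖q * z‖ ^ 2 = ‖star z * (q * q) * z‖ := by
        rw [sq, ← CStarRing.norm_star_mul_self, star_mul, hq'.star_eq]
        noncomm_ring
    _ ≤ ‖star z * (‖q‖ • Q) * z‖ := norm_star_left_conjugate_le_of_le hq'.mul_self_nonneg hsq z
    _ = ‖q‖ * ‖star z * (Q * z)‖ := by
        rw [mul_smul_comm, smul_mul_assoc, norm_smul, norm_norm, mul_assoc]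
    _ ≤ ‖Q‖ * (‖z‖ * ‖Q * z‖) := by
        gcongr
        · exact norm_le_norm_of_nonneg_of_le hq hqQ
        · exact (norm_mul_le _ _).trans_eq (by rw [norm_star])

theorem cauchySeq_mul_of_increments_le {Λ : Type*} [Preorder Λ] [IsDirected Λ (· ≤ ·)]
    [Nonempty Λ] {x y : Λ → E} (hy : ∀ l u, l ≤ u → 0 ≤ y u - y l)
    (hyx : ∀ l u, l ≤ u → y u - y l ≤ x u - x l) {K : ℝ} (hK : ∀ᶠ l in atTop, ‖x l‖ ≤ K)
    {z : E} (hx : CauchySeq fun l => x l * z) : CauchySeq fun l => y l * z := by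
  rw [cauchySeq_iff_eventually_forall_le_dist_lt] at hx ⊢
  intro ε hε
  obtain ⟨l₀, hl₀⟩ := hK.exists
  have hK₀ : 0 ≤ K := (norm_nonneg _).trans hl₀
  set δ := ε ^ 2 / (2 * K * ‖z‖ + 1)
  have hδ : 2 * K * (‖z‖ * δ) < ε ^ 2 := by
    rw [← mul_assoc, mul_div_assoc', div_lt_iff₀ (by positivity)]
    nlinarith [sq_pos_of_pos hε]
  filter_upwards [eventually_forall_ge_atTop.mpr hK, hx δ (by positivity)] with l hKl hxl u hlu
  simp only [dist_eq_norm, ← sub_mul] at hxl ⊢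
  have hnorm : ‖x u - x l‖ ≤ 2 * K := by
    linarith [norm_sub_le (x u) (x l), hKl u hlu, hKl l le_rfl]
  refine lt_of_pow_lt_pow_left₀ 2 hε.le ?_
  calc ‖(y u - y l) * z‖ ^ 2 ≤ ‖x u - x l‖ * (‖z‖ * ‖(x u - x l) * z‖) :=
        norm_mul_sq_le_of_le (hy l u hlu) (hyx l u hlu) z
    _ ≤ 2 * K * (‖z‖ * δ) := by gcongr; exact (hxl u hlu).le
    _ < ε ^ 2 := hδ

end CStarAlgebra

namespace DoubleCentralizer

section CStarRing

variable {𝕜 A : Type*} [DenselyNormedField 𝕜] [NonUnitalNormedRing A] [StarRing A]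
  [CStarRing A] [NormedSpace 𝕜 A] [SMulCommClass 𝕜 A A] [IsScalarTower 𝕜 A A]

theorem fst_mul (m : 𝓜(𝕜, A)) (a c : A) : m.fst (a * c) = m.fst a * c := by
  have h : ∀ x : A, x * (m.fst (a * c) - m.fst a * c) = 0 := fun x => by
    rw [mul_sub, ← m.central, ← mul_assoc, m.central, mul_assoc, sub_self]
  rw [← sub_eq_zero, ← CStarRing.star_mul_self_eq_zero_iff, h]

theorem mul_coe (m : 𝓜(𝕜, A)) (a : A) : m * (a : 𝓜(𝕜, A)) = (m.fst a : 𝓜(𝕜, A)) := by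
  ext c
  · simp [fst_mul]
  · simpa using m.central c a

theorem norm_coe (a : A) : ‖(a : 𝓜(𝕜, A))‖ = ‖a‖ := by
  rw [← norm_fst]
  exact ContinuousLinearMap.opNorm_mul_apply 𝕜 A a

variable [StarRing 𝕜] [StarModule 𝕜 A]

theorem isometry_coe : Isometry (DoubleCentralizer.coe 𝕜 : A → 𝓜(𝕜, A)) :=
  AddMonoidHomClass.isometry_of_norm (coeHom (𝕜 := 𝕜) (A := A)) norm_coe

theorem tendsto_fst_iff {α : Type*} {l : Filter α} {x : α → 𝓜(𝕜, A)} {a c : A} :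
    Tendsto (fun i => (x i).fst a) l (𝓝 c) ↔
      Tendsto (fun i => x i * (a : 𝓜(𝕜, A))) l (𝓝 (c : 𝓜(𝕜, A))) := by
  simp_rw [mul_coe]
  exact isometry_coe.isEmbedding.tendsto_nhds_iff

theorem cauchySeq_fst_iff {Λ : Type*} [Preorder Λ] {x : Λ → 𝓜(𝕜, A)} {a : A} :
    CauchySeq (fun l => (x l).fst a) ↔ CauchySeq (fun l => x l * (a : 𝓜(𝕜, A))) := by
  simp_rw [mul_coe, CauchySeq, ← Function.comp_def (DoubleCentralizer.coe 𝕜), ← map_map]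
  exact isometry_coe.isUniformInducing.cauchy_map_iff.symm

theorem snd_eq_star_fst_star {y : 𝓜(𝕜, A)} (hy : IsSelfAdjoint y) (a : A) :
    y.snd a = star (y.fst (star a)) := by
  rw [← star_snd, hy.star_eq]

end CStarRing

section Limits

variable {𝕜 A : Type*} [NontriviallyNormedField 𝕜] [NonUnitalNormedRing A] [NormedSpace 𝕜 A]
  [SMulCommClass 𝕜 A A] [IsScalarTower 𝕜 A A]

theorem exists_fst_snd_eq_of_tendsto {α : Type*} {l : Filter α} [l.NeBot] {x : α → 𝓜(𝕜, A)} {K : ℝ}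
    (hK : ∀ᶠ i in l, ‖x i‖ ≤ K) {f g : A → A}
    (hf : ∀ a, Tendsto (fun i => (x i).fst a) l (𝓝 (f a)))
    (hg : ∀ a, Tendsto (fun i => (x i).snd a) l (𝓝 (g a))) :
    ∃ m : 𝓜(𝕜, A), ⇑m.fst = f ∧ ⇑m.snd = g := by
  have hball (φ : 𝓜(𝕜, A) → A →L[𝕜] A) (hφ : ∀ y, ‖φ y‖ ≤ ‖y‖) :
      ∀ᶠ i in l, ⇑(φ (x i)) ∈ (⇑) '' Metric.closedBall (0 : A →L[𝕜] A) K :=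
    hK.mono fun i hi => ⟨φ (x i), mem_closedBall_zero_iff.2 ((hφ _).trans hi), rfl⟩
  let F := ContinuousLinearMap.ofMemClosureImageCoeBounded f Metric.isBounded_closedBall
    (mem_closure_of_tendsto (tendsto_pi_nhds.2 hf)
      (hball _ fun y => (norm_def' y).symm ▸ norm_fst_le _))
  let G := ContinuousLinearMap.ofMemClosureImageCoeBounded g Metric.isBounded_closedBall
    (mem_closure_of_tendsto (tendsto_pi_nhds.2 hg)
      (hball _ fun y => (norm_def' y).symm ▸ norm_snd_le _))
  have central (a b : A) : g a * b = a * f b :=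
    tendsto_nhds_unique (((hg a).mul_const b).congr fun i => (x i).central a b)
      ((hf b).const_mul a)
  exact ⟨⟨(F, G), central⟩, rfl, rfl⟩

end Limits

section Order

variable {A : Type*} [NonUnitalCStarAlgebra A] [PartialOrder 𝓜(ℂ, A)] [StarOrderedRing 𝓜(ℂ, A)]

theorem norm_le_of_forall_norm_star_left_conjugate_coe_le {Q : 𝓜(ℂ, A)} (hQ : 0 ≤ Q) {C : ℝ}
    (hC : 0 ≤ C) (h : ∀ a : A, ‖star (a : 𝓜(ℂ, A)) * Q * a‖ ≤ C * ‖a‖ ^ 2) : ‖Q‖ ≤ C := by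
  obtain ⟨s, hs, rfl⟩ : ∃ s, IsSelfAdjoint s ∧ s * s = Q :=
    ⟨CFC.sqrt Q, .of_nonneg (CFC.sqrt_nonneg Q), CFC.sqrt_mul_sqrt_self Q⟩
  have hfst (a : A) : ‖s.fst a‖ ≤ √C * ‖a‖ := by
    refine (pow_le_pow_iff_left₀ (norm_nonneg _) (by positivity) two_ne_zero).1 ?_
    rw [← norm_coe (𝕜 := ℂ), ← mul_coe, mul_pow, Real.sq_sqrt hC, sq,
      ← CStarRing.norm_star_mul_self, star_mul, hs.star_eq]
    simpa only [mul_assoc] using h a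
  have hs_norm : ‖s‖ ≤ √C := by
    rw [← norm_fst]
    exact ContinuousLinearMap.opNorm_le_bound _ (Real.sqrt_nonneg C) hfst
  calc ‖s * s‖ = ‖s‖ ^ 2 := hs.norm_mul_self
    _ ≤ √C ^ 2 := by gcongr
    _ = C := Real.sq_sqrt hC

variable {Λ : Type*} [Preorder Λ] [IsDirected Λ (· ≤ ·)] [Nonempty Λ] {x : Λ → 𝓜(ℂ, A)}
  {m : 𝓜(ℂ, A)}

theorem norm_sub_le_of_monotone (hx : Monotone x)
    (hm : ∀ a : A, Tendsto (fun l => x l * (a : 𝓜(ℂ, A))) atTop (𝓝 (m * a))) {l u : Λ}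
    (hlu : l ≤ u) : ‖x u - x l‖ ≤ ‖m - x l‖ := by
  refine norm_le_of_forall_norm_star_left_conjugate_coe_le (sub_nonneg.2 (hx hlu))
    (norm_nonneg _) fun a => ?_
  set z : 𝓜(ℂ, A) := ↑a
  have hlim : Tendsto (fun v => ‖star z * (x v - x l) * z‖) atTop
      (𝓝 ‖star z * (m - x l) * z‖) := by
    simp_rw [mul_assoc, sub_mul]
    exact (((hm a).sub_const _).const_mul _).norm
  calc ‖star z * (x u - x l) * z‖ ≤ ‖star z * (m - x l) * z‖ :=
        ge_of_tendsto hlim <| (eventually_ge_atTop u).mono fun v hv =>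
          CStarAlgebra.norm_star_left_conjugate_le_of_le (sub_nonneg.2 (hx hlu))
            (sub_le_sub_right (hx hv) _) z
    _ ≤ ‖star z‖ * ‖m - x l‖ * ‖z‖ := norm_mul₃_le
    _ = ‖m - x l‖ * ‖a‖ ^ 2 := by rw [norm_star, norm_coe]; ring

theorem exists_eventually_norm_le_of_monotone (hx : Monotone x)
    (hm : ∀ a : A, Tendsto (fun l => x l * (a : 𝓜(ℂ, A))) atTop (𝓝 (m * a))) :
    ∃ K, ∀ᶠ l in atTop, ‖x l‖ ≤ K := by
  obtain ⟨l₀⟩ := ‹Nonempty Λ›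
  refine ⟨‖x l₀‖ + ‖m - x l₀‖, (eventually_ge_atTop l₀).mono fun u hu => ?_⟩
  calc ‖x u‖ = ‖x l₀ + (x u - x l₀)‖ := by rw [add_sub_cancel]
    _ ≤ ‖x l₀‖ + ‖m - x l₀‖ :=
        (norm_add_le _ _).trans (add_le_add_right (norm_sub_le_of_monotone hx hm hu) _)

end Order

end DoubleCentralizer

open DoubleCentralizer in
/-- **Key Lemma.** Let `(p_λ)` be an increasing net of positive linear maps from a
C*-algebra `B` into the multiplier algebra `M(A)` of a C*-algebra `A`.  If `b ∈ B⁺` is such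
that the net `(p_λ(b))` converges strictly to some element of `M(A)`, then for every
`b₀` with `0 ≤ b₀ ≤ b`, the net `(p_λ(b₀))` also converges strictly to some element of
`M(A)`: the cone of elements where the net converges strictly is hereditary. -/
theorem stmt3
    {A B : Type*} [NonUnitalCStarAlgebra A] [NonUnitalCStarAlgebra B]
    [PartialOrder B] [StarOrderedRing B]
    [PartialOrder 𝓜(ℂ, A)] [StarOrderedRing 𝓜(ℂ, A)]
    {Λ : Type*} [Preorder Λ] [Nonempty Λ] [IsDirected Λ (· ≤ ·)]
    (p : Λ → B →ₗ[ℂ] 𝓜(ℂ, A))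
    (hpos : ∀ (l : Λ) (b : B), 0 ≤ b → 0 ≤ p l b)
    (hmono : ∀ (l l' : Λ), l ≤ l' → ∀ b : B, 0 ≤ b → 0 ≤ p l' b - p l b)
    (b : B) (hb : 0 ≤ b)
    (m : 𝓜(ℂ, A))
    (hconv : ∀ a : A,
      Tendsto (fun l => (p l b).fst a) atTop (𝓝 (m.fst a)) ∧
      Tendsto (fun l => (p l b).snd a) atTop (𝓝 (m.snd a)))
    (b₀ : B) (hb₀ : 0 ≤ b₀) (hb₀b : b₀ ≤ b) :
    ∃ m₀ : 𝓜(ℂ, A), ∀ a : A,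
      Tendsto (fun l => (p l b₀).fst a) atTop (𝓝 (m₀.fst a)) ∧
      Tendsto (fun l => (p l b₀).snd a) atTop (𝓝 (m₀.snd a)) := by
  have hb_mono : Monotone (p · b) := fun l u h => sub_nonneg.1 (hmono l u h b hb)
  have hb₀_le (l : Λ) : p l b₀ ≤ p l b := by
    simpa only [map_sub, sub_nonneg] using hpos l (b - b₀) (sub_nonneg.2 hb₀b)
  have hincr (l u : Λ) (h : l ≤ u) : p u b₀ - p l b₀ ≤ p u b - p l b := by
    simpa only [map_sub, sub_sub_sub_comm, sub_nonneg] using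
      hmono l u h (b - b₀) (sub_nonneg.2 hb₀b)
  have hstrict (a : A) : Tendsto (fun l => p l b * (a : 𝓜(ℂ, A))) atTop (𝓝 (m * a)) := by
    rw [mul_coe]
    exact tendsto_fst_iff.1 (hconv a).1
  obtain ⟨K, hK⟩ := exists_eventually_norm_le_of_monotone hb_mono hstrict
  have hK₀ : ∀ᶠ l in atTop, ‖p l b₀‖ ≤ K := hK.mono fun l hl =>
    (CStarAlgebra.norm_le_norm_of_nonneg_of_le (hpos l b₀ hb₀) (hb₀_le l)).trans hl
  have hcauchy (a : A) : CauchySeq fun l => (p l b₀).fst a :=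
    cauchySeq_fst_iff.2 <| CStarAlgebra.cauchySeq_mul_of_increments_le (x := (p · b))
      (y := (p · b₀)) (fun l u h => hmono l u h b₀ hb₀) hincr hK (hstrict a).cauchy_map
  choose f hf using fun a => cauchySeq_tendsto_of_complete (hcauchy a)
  have hsnd (a : A) : Tendsto (fun l => (p l b₀).snd a) atTop (𝓝 (star (f (star a)))) := by
    simp_rw [snd_eq_star_fst_star (.of_nonneg (hpos _ b₀ hb₀))]
    exact (hf (star a)).star
  obtain ⟨m₀, hm₀f, hm₀g⟩ := exists_fst_snd_eq_of_tendsto hK₀ hf hsnd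
  exact ⟨m₀, fun a => ⟨hm₀f ▸ hf a, hm₀g ▸ hsnd a⟩⟩
end

section
/- Let λ ∈ ℬ(G) and let (e_ν) be a bounded approximate identity for A, i.e., a net in A with sup_ν ‖e_ν‖ < ∞ and ‖e_ν a − a‖ → 0 and ‖a e_ν − a‖ → 0 for every a ∈ A. Then for every c ∈ A, ‖c · p_λ(e_ν) − (∫ λ(x) dx) · c‖ → 0 and ‖p_λ(e_ν) · c − (∫ λ(x) dx) · c‖ → 0 along the net ν. -/
/-!
Put `a_x = α_{x⁻¹}(c)`. Then `c α_x(b) - c = α_x(a_x b - a_x)`, so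
`c p_λ(e_ν) - (∫ λ) c = ∫ λ(x) α_x(a_x e_ν - a_x) dx` has norm at most `∫ λ(x) ‖a_x e_ν - a_x‖ dx`.
The `a_x` with `x ∈ supp λ` form a compact set, and a bounded approximate identity is an
equicontinuous family of multiplication maps, so by Ascoli it converges uniformly on compact sets.
Hence the integrand tends to zero uniformly on `supp λ`. The right-hand case is symmetric.
-/
open MeasureTheory Filter Topology Function

theorem Equicontinuous.tendstoUniformlyOn_of_tendsto {ι X α : Type*} [TopologicalSpace X]
    [UniformSpace α] {F : ι → X → α} (hF : Equicontinuous F) {f : X → α} {l : Filter ι}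
    (h : ∀ x, Tendsto (F · x) l (𝓝 (f x))) {K : Set X} (hK : IsCompact K) :
    TendstoUniformlyOn F f l K := by
  have := (EquicontinuousOn.tendsto_uniformOnFun_iff_pi (𝔖 := {K | IsCompact K})
    (fun _ hK => hK) (Set.sUnion_eq_univ_iff.2 fun x => ⟨{x}, isCompact_singleton, rfl⟩)
    (fun _ _ => hF.equicontinuousOn _) l f).2 (tendsto_pi_nhds.2 h)
  exact UniformOnFun.tendsto_iff_tendstoUniformlyOn.1 this K hK

section ApproximateIdentity

variable {ι A : Type*} [NonUnitalNormedRing A] {e : ι → A} {C : ℝ} {l : Filter ι} {K : Set A}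

theorem tendstoUniformlyOn_mul_const (hC : ∀ ν, ‖e ν‖ ≤ C)
    (he : ∀ a, Tendsto (fun ν => a * e ν) l (𝓝 a)) (hK : IsCompact K) :
    TendstoUniformlyOn (fun ν a => a * e ν) id l K := by
  refine Equicontinuous.tendstoUniformlyOn_of_tendsto ?_ he hK
  refine (LipschitzWith.uniformEquicontinuous _ C.toNNReal fun ν => ?_).equicontinuous
  exact (lipschitzWith_smul (MulOpposite.op (e ν))).weaken
    ((hC ν).trans (Real.le_coe_toNNReal C))

theorem tendstoUniformlyOn_const_mul (hC : ∀ ν, ‖e ν‖ ≤ C)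
    (he : ∀ a, Tendsto (fun ν => e ν * a) l (𝓝 a)) (hK : IsCompact K) :
    TendstoUniformlyOn (fun ν a => e ν * a) id l K := by
  refine Equicontinuous.tendstoUniformlyOn_of_tendsto ?_ he hK
  refine (LipschitzWith.uniformEquicontinuous _ C.toNNReal fun ν => ?_).equicontinuous
  exact (lipschitzWith_smul (e ν)).weaken ((hC ν).trans (Real.le_coe_toNNReal C))

end ApproximateIdentity

section Integral

variable {X E : Type*} [MeasurableSpace X] {μ : Measure X} [NormedAddCommGroup E]

theorem HasCompactSupport.integrable_of_norm_le [TopologicalSpace X]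
    [IsFiniteMeasureOnCompacts μ] {f : X → E} (hfc : HasCompactSupport f)
    (hf : AEStronglyMeasurable f μ) {M : ℝ} (hM : ∀ x, ‖f x‖ ≤ M) : Integrable f μ :=
  (integrableOn_iff_integrable_of_support_subset (subset_tsupport f)).1 <|
    Measure.integrableOn_of_bounded hfc.measure_lt_top.ne hf (ae_of_all _ hM)

theorem HasCompactSupport.integrable_smul_of_continuous [TopologicalSpace X]
    [OpensMeasurableSpace X] {𝕜 : Type*} [NormedField 𝕜] [NormedSpace 𝕜 E] {f : X → 𝕜}
    (hfc : HasCompactSupport f) (hf : Integrable f μ) {g : X → E} (hg : Continuous g) :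
    Integrable (fun x => f x • g x) μ := by
  have hs : MeasurableSet (tsupport f) := (isClosed_tsupport f).measurableSet
  obtain ⟨M, hM⟩ := IsCompact.exists_bound_of_continuousOn hfc hg.continuousOn
  refine (integrableOn_iff_integrable_of_support_subset
    ((support_smul_subset_left f g).trans (subset_tsupport f))).1 ?_
  exact hf.integrableOn.smul_bdd M (hg.continuousOn.aestronglyMeasurable_of_isCompact hfc hs)
    (ae_restrict_of_forall_mem hs hM)

theorem ContinuousLinearMap.map_integral_smul_sub {𝕜 F : Type*} [RCLike 𝕜] [NormedSpace 𝕜 E]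
    [NormedSpace ℝ E] [CompleteSpace E] [NormedAddCommGroup F] [NormedSpace 𝕜 F]
    [NormedSpace ℝ F] [CompleteSpace F] (T : E →L[𝕜] F) {f : X → ℝ} {g : X → E}
    (hf : Integrable f μ) (hfg : Integrable (fun x => (f x : 𝕜) • g x) μ) (c : F) :
    T (∫ x, (f x : 𝕜) • g x ∂μ) - ((∫ x, f x ∂μ : ℝ) : 𝕜) • c
      = ∫ x, (f x : 𝕜) • (T (g x) - c) ∂μ := by
  have hfc : Integrable (fun x => (f x : 𝕜) • c) μ := hf.ofReal.smul_const c
  simp_rw [smul_sub, ← map_smul]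
  rw [integral_sub (T.integrable_comp hfg) hfc, T.integral_comp_comm hfg, integral_smul_const,
    integral_ofReal]

theorem tendsto_integral_smul_of_tendstoUniformlyOn {ι 𝕜 : Type*} [NormedSpace ℝ E]
    [NormedField 𝕜] [NormedSpace 𝕜 E] {f : X → 𝕜} (hf : Integrable f μ) {s : Set X}
    (hfs : support f ⊆ s) {g : ι → X → E} {l : Filter ι} (hg : TendstoUniformlyOn g 0 l s) :
    Tendsto (fun ν => ∫ x, f x • g ν x ∂μ) l (𝓝 0) := by
  set M := ∫ x, ‖f x‖ ∂μ
  have hM : 0 ≤ M := integral_nonneg fun x => norm_nonneg _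
  refine Metric.tendsto_nhds.2 fun ε hε => ?_
  filter_upwards [Metric.tendstoUniformlyOn_iff.1 hg (ε / (M + 1)) (by positivity)] with ν hν
  have hbound : ∀ x, ‖f x • g ν x‖ ≤ ‖f x‖ * (ε / (M + 1)) := fun x => by
    rw [norm_smul]
    by_cases hx : f x = 0
    · simp [hx]
    · have := hν x (hfs hx)
      rw [Pi.zero_apply, dist_zero_left] at this
      gcongr
  calc dist (∫ x, f x • g ν x ∂μ) 0 ≤ ∫ x, ‖f x‖ * (ε / (M + 1)) ∂μ := by
        rw [dist_zero_right]
        exact norm_integral_le_of_norm_le (hf.norm.mul_const _) (ae_of_all _ hbound)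
    _ = M * ε / (M + 1) := by rw [integral_mul_const, mul_div_assoc]
    _ < ε := by rw [div_lt_iff₀ (by positivity)]; nlinarith

end Integral

section Action

variable {G A : Type*} [Group G]

theorem mul_apply_sub_eq_apply_mul_apply_inv_sub {R : Type*} [NonUnitalRing A] [Star A]
    [SMul R A] {α : G → (A ≃⋆ₐ[R] A)} (hone : ∀ a : A, α 1 a = a)
    (hmul : ∀ (x y : G) (a : A), α (x * y) a = α x (α y a)) (x : G) (b c : A) :
    c * α x b - c = α x (α x⁻¹ c * b - α x⁻¹ c) := by
  rw [map_sub, map_mul, ← hmul, mul_inv_cancel, hone]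

theorem apply_mul_sub_eq_apply_mul_apply_inv_sub {R : Type*} [NonUnitalRing A] [Star A]
    [SMul R A] {α : G → (A ≃⋆ₐ[R] A)} (hone : ∀ a : A, α 1 a = a)
    (hmul : ∀ (x y : G) (a : A), α (x * y) a = α x (α y a)) (x : G) (b c : A) :
    α x b * c - c = α x (b * α x⁻¹ c - α x⁻¹ c) := by
  rw [map_sub, map_mul, ← hmul, mul_inv_cancel, hone]

theorem tendstoUniformlyOn_apply_sub_apply_inv [TopologicalSpace G] [IsTopologicalGroup G]
    [NonUnitalCStarAlgebra A] {α : G → (A ≃⋆ₐ[ℂ] A)} (hα : ∀ a : A, Continuous fun x => α x a)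
    {ι : Type*} {F : ι → A → A} {l : Filter ι} (hF : ∀ K, IsCompact K → TendstoUniformlyOn F id l K)
    {s : Set G} (hs : IsCompact s) (c : A) :
    TendstoUniformlyOn (fun ν x => α x (F ν (α x⁻¹ c) - α x⁻¹ c)) (0 : G → A) l s := by
  have hK := hF _ (hs.image ((hα c).comp continuous_inv))
  rw [Metric.tendstoUniformlyOn_iff] at hK ⊢
  intro ε hε
  filter_upwards [hK ε hε] with ν hν x hx
  simpa only [Pi.zero_apply, dist_eq_norm', sub_zero, StarAlgEquiv.norm_map, id,
    Function.comp_apply] using hν _ ⟨x, hx, rfl⟩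

end Action

theorem stmt4_general
    {G : Type*} [Group G] [TopologicalSpace G] [IsTopologicalGroup G]
    [MeasurableSpace G] [BorelSpace G]
    (μ : Measure G) [μ.IsHaarMeasure]
    {A : Type*} [NonUnitalCStarAlgebra A]
    (α : G → (A ≃⋆ₐ[ℂ] A))
    (hone : ∀ a : A, α 1 a = a)
    (hmul : ∀ (x y : G) (a : A), α (x * y) a = α x (α y a))
    (hα : ∀ a : A, Continuous fun x => α x a)
    (lam : G → ℝ) (hlam_meas : Measurable lam) (hlam_supp : HasCompactSupport lam)
    (hlam0 : ∀ x, 0 ≤ lam x) (hlam1 : ∀ x, lam x ≤ 1)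
    {ι : Type*} [Preorder ι]
    (e : ι → A) (hbdd : ∃ C : ℝ, ∀ ν, ‖e ν‖ ≤ C)
    (hai : ∀ a : A,
      Tendsto (fun ν => ‖e ν * a - a‖) atTop (𝓝 0) ∧
      Tendsto (fun ν => ‖a * e ν - a‖) atTop (𝓝 0)) :
    ∀ c : A,
      Tendsto (fun ν =>
        ‖c * (∫ x, (lam x : ℂ) • α x (e ν) ∂μ) - ((∫ x, lam x ∂μ : ℝ) : ℂ) • c‖)
        atTop (𝓝 0) ∧
      Tendsto (fun ν =>
        ‖(∫ x, (lam x : ℂ) • α x (e ν) ∂μ) * c - ((∫ x, lam x ∂μ : ℝ) : ℂ) • c‖)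
        atTop (𝓝 0) := by
  intro c
  obtain ⟨C, hC⟩ := hbdd
  have hlam : Integrable lam μ := hlam_supp.integrable_of_norm_le hlam_meas.aestronglyMeasurable
    fun x => by rw [Real.norm_of_nonneg (hlam0 x)]; exact hlam1 x
  have hp (T : A →L[ℂ] A) (b : A) :
      T (∫ x, (lam x : ℂ) • α x b ∂μ) - ((∫ x, lam x ∂μ : ℝ) : ℂ) • c
        = ∫ x, (lam x : ℂ) • (T (α x b) - c) ∂μ :=
    T.map_integral_smul_sub hlam
      ((hlam_supp.comp_left Complex.ofReal_zero).integrable_smul_of_continuous hlam.ofReal (hα b)) c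
  have hlim (F : ι → A → A) (hF : ∀ K, IsCompact K → TendstoUniformlyOn F id atTop K) :
      Tendsto (fun ν => ∫ x, (lam x : ℂ) • α x (F ν (α x⁻¹ c) - α x⁻¹ c) ∂μ) atTop (𝓝 0) :=
    tendsto_integral_smul_of_tendstoUniformlyOn hlam.ofReal
      ((support_comp_subset Complex.ofReal_zero _).trans (subset_tsupport lam))
      (tendstoUniformlyOn_apply_sub_apply_inv hα hF hlam_supp c)
  refine ⟨tendsto_zero_iff_norm_tendsto_zero.1 ?_, tendsto_zero_iff_norm_tendsto_zero.1 ?_⟩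
  · convert hlim _ fun K => tendstoUniformlyOn_mul_const hC
      fun a => tendsto_iff_norm_sub_tendsto_zero.2 (hai a).2 using 2 with ν
    simpa only [ContinuousLinearMap.mul_apply', mul_apply_sub_eq_apply_mul_apply_inv_sub hone hmul]
      using hp (ContinuousLinearMap.mul ℂ A c) (e ν)
  · convert hlim _ fun K => tendstoUniformlyOn_const_mul hC
      fun a => tendsto_iff_norm_sub_tendsto_zero.2 (hai a).1 using 2 with ν
    simpa only [ContinuousLinearMap.flip_apply, ContinuousLinearMap.mul_apply',
      apply_mul_sub_eq_apply_mul_apply_inv_sub hone hmul]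
      using hp ((ContinuousLinearMap.mul ℂ A).flip c) (e ν)

/-- For `λ ∈ ℬ(G)` and a bounded approximate identity `(e_ν)` of `A`, the net
`(p_λ(e_ν))` converges strictly in `M(A)` to `(∫ λ(x) dx)·1`, i.e. for every `c ∈ A`,
`‖c p_λ(e_ν) − (∫λ)c‖ → 0` and `‖p_λ(e_ν) c − (∫λ)c‖ → 0`. -/
theorem stmt4
    {G : Type*} [Group G] [TopologicalSpace G] [IsTopologicalGroup G]
    [LocallyCompactSpace G] [MeasurableSpace G] [BorelSpace G]
    (μ : Measure G) [μ.IsHaarMeasure]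
    {A : Type*} [NonUnitalCStarAlgebra A]
    (α : G → (A ≃⋆ₐ[ℂ] A))
    (hone : ∀ a : A, α 1 a = a)
    (hmul : ∀ (x y : G) (a : A), α (x * y) a = α x (α y a))
    (hα : ∀ a : A, Continuous fun x => α x a)
    (lam : G → ℝ) (hlam_meas : Measurable lam) (hlam_supp : HasCompactSupport lam)
    (hlam0 : ∀ x, 0 ≤ lam x) (hlam1 : ∀ x, lam x ≤ 1)
    {ι : Type*} [Preorder ι] [Nonempty ι] [IsDirected ι (· ≤ ·)]
    (e : ι → A) (hbdd : ∃ C : ℝ, ∀ ν, ‖e ν‖ ≤ C)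
    (hai : ∀ a : A,
      Tendsto (fun ν => ‖e ν * a - a‖) atTop (𝓝 0) ∧
      Tendsto (fun ν => ‖a * e ν - a‖) atTop (𝓝 0)) :
    ∀ c : A,
      Tendsto (fun ν =>
        ‖c * (∫ x, (lam x : ℂ) • α x (e ν) ∂μ) - ((∫ x, lam x ∂μ : ℝ) : ℂ) • c‖)
        atTop (𝓝 0) ∧
      Tendsto (fun ν =>
        ‖(∫ x, (lam x : ℂ) • α x (e ν) ∂μ) * c - ((∫ x, lam x ∂μ : ℝ) : ℂ) • c‖)
        atTop (𝓝 0) :=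
  stmt4_general μ α hone hmul hα lam hlam_meas hlam_supp hlam0 hlam1 e hbdd hai
end

section
/- Let C be a C*-algebra and let ℋ ⊆ C be a *-subalgebra (not necessarily closed) which equals the linear span of ℋ⁺ := ℋ ∩ C⁺ and such that ℋ⁺ is a hereditary cone in C: whenever c ∈ C and h ∈ ℋ⁺ with 0 ≤ c ≤ h, then c ∈ ℋ. Then: (i) h₁ c h₂ ∈ ℋ for all h₁, h₂ ∈ ℋ and c ∈ C; (ii) if D denotes the closure in C of the linear span of {h₁ c h₂ : h₁, h₂ ∈ ℋ, c ∈ C}, then the set (span ℋCℋ) ∩ C⁺ is dense in D ∩ C⁺; and (iii) the norm closure of ℋ in C is a hereditary C*-subalgebra of C, i.e., a closed *-subalgebra B such that c ∈ C, b ∈ B and 0 ≤ c ≤ b imply c ∈ B. -/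
/-!
For `a ∈ ℋ` and `c ≥ 0` we have `0 ≤ a⋆ c a ≤ ‖c‖ a⋆ a ∈ ℋ`, so heredity puts `a⋆ c a` in `ℋ`; as
every `c` is a combination of positive elements and `h₁ c h₂` is a polarization of such terms,
`ℋ C ℋ ⊆ ℋ`.

For the closure `B` of `ℋ`: if `0 ≤ c ≤ b ∈ B`, let `g_δ = b (b + δ)⁻¹ ∈ B`. In the unitization
`E = 1 - g_δ` satisfies `‖E b E‖ ≤ δ`, hence `‖E c E‖ ≤ δ` and `‖c E‖² ≤ ‖c‖ δ`, so that
`g_δ c g_δ → c`. Approximating `g_δ` by elements `h` of `ℋ`, `c` is a limit of elements `h⋆ c h`,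
which lie in `ℋ` and, when `c = d`, in `span ℋCℋ ∩ C⁺`.
-/

open Complex Filter Topology

theorem star_mul_mul_polarization {A : Type*} [NonUnitalRing A] [StarRing A] [Module ℂ A]
    [StarModule ℂ A] [IsScalarTower ℂ A A] [SMulCommClass ℂ A A] (x y c : A) :
    star y * c * x = (4 : ℂ)⁻¹ •
      (star (x + y) * c * (x + y) - star (x - y) * c * (x - y)
        + I • (star (x + I • y) * c * (x + I • y))
        - I • (star (x - I • y) * c * (x - I • y))) := by
  simp only [star_add, star_sub, star_smul, RCLike.star_def, conj_I, neg_smul, neg_mul,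
    mul_add, add_mul, mul_sub, sub_mul, smul_mul_assoc, mul_smul_comm, smul_add, smul_sub,
    smul_neg, smul_smul]
  match_scalars <;> ring_nf <;> norm_num [I_sq]

section Hereditary

variable {C : Type*} [NonUnitalCStarAlgebra C] [PartialOrder C] [StarOrderedRing C]
  {H : NonUnitalStarSubalgebra ℂ C}

theorem star_mul_mul_self_mem_of_hereditary (hher : ∀ c h : C, h ∈ H → 0 ≤ c → c ≤ h → c ∈ H)
    {a : C} (ha : a ∈ H) (c : C) : star a * c * a ∈ H := by
  have hc : c ∈ Submodule.span ℂ {x : C | 0 ≤ x} := by simp [CStarAlgebra.span_nonneg]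
  induction hc using Submodule.span_induction with
  | mem x hx =>
    refine hher _ ((‖x‖ : ℂ) • (star a * a)) (SMulMemClass.smul_mem _ (mul_mem (star_mem ha) ha))
      (star_left_conjugate_nonneg hx a) ?_
    simpa [Complex.coe_smul] using CStarAlgebra.star_left_conjugate_le_norm_smul (a := a) (b := x)
  | zero => simp
  | add x y _ _ hx hy => simpa [mul_add, add_mul] using add_mem hx hy
  | smul z x _ hx => simpa [mul_smul_comm, smul_mul_assoc] using SMulMemClass.smul_mem z hx

theorem mul_mul_mem_of_hereditary (hher : ∀ c h : C, h ∈ H → 0 ≤ c → c ≤ h → c ∈ H)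
    {h₁ h₂ : C} (h₁_mem : h₁ ∈ H) (h₂_mem : h₂ ∈ H) (c : C) : h₁ * c * h₂ ∈ H := by
  have hconj {x : C} (hx : x ∈ H) := star_mul_mul_self_mem_of_hereditary hher hx c
  have hy : star h₁ ∈ H := star_mem h₁_mem
  have hIy : I • star h₁ ∈ H := SMulMemClass.smul_mem I hy
  rw [← star_star h₁, star_mul_mul_polarization]
  refine SMulMemClass.smul_mem _ (sub_mem (add_mem (sub_mem ?_ ?_) (SMulMemClass.smul_mem _ ?_))
    (SMulMemClass.smul_mem _ ?_))
  exacts [hconj (add_mem h₂_mem hy), hconj (sub_mem h₂_mem hy), hconj (add_mem h₂_mem hIy),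
    hconj (sub_mem h₂_mem hIy)]

end Hereditary

section Unital

variable {A : Type*} [CStarAlgebra A] [PartialOrder A] [StarOrderedRing A]

theorem norm_sub_one_sub_mul_mul_one_sub_le {b c E : A} (hc : 0 ≤ c) (hcb : c ≤ b)
    (hE : IsSelfAdjoint E) :
    ‖c - (1 - E) * c * (1 - E)‖ ≤ 2 * √(‖c‖ * ‖E * b * E‖) + ‖E * b * E‖ := by
  have hEcE : ‖E * c * E‖ ≤ ‖E * b * E‖ := by
    simpa only [hE.star_eq] using CStarAlgebra.norm_le_norm_of_nonneg_of_le
      (star_left_conjugate_nonneg hc E) (star_left_conjugate_le_conjugate hcb E)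
  set s := CFC.sqrt c
  have hs : IsSelfAdjoint s := (CFC.sqrt_nonneg c).isSelfAdjoint
  have hss : s * s = c := CFC.sqrt_mul_sqrt_self c
  have hcE : ‖c * E‖ ≤ √(‖c‖ * ‖E * b * E‖) := by
    have hs_norm : ‖s‖ ^ 2 = ‖c‖ := by
      rw [sq, ← CStarRing.norm_star_mul_self, hs.star_eq, hss]
    have hsE_norm : ‖s * E‖ ^ 2 = ‖E * c * E‖ := by
      rw [sq, ← CStarRing.norm_star_mul_self, star_mul, hs.star_eq, hE.star_eq, ← hss]
      noncomm_ring
    refine Real.le_sqrt_of_sq_le ?_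
    calc ‖c * E‖ ^ 2 = ‖s * (s * E)‖ ^ 2 := by rw [← mul_assoc, hss]
      _ ≤ (‖s‖ * ‖s * E‖) ^ 2 := by gcongr; exact norm_mul_le _ _
      _ = ‖c‖ * ‖E * c * E‖ := by rw [mul_pow, hs_norm, hsE_norm]
      _ ≤ ‖c‖ * ‖E * b * E‖ := by gcongr
  have hEc : ‖E * c‖ = ‖c * E‖ := by
    rw [← norm_star (c * E), star_mul, hE.star_eq, hc.isSelfAdjoint.star_eq]
  calc ‖c - (1 - E) * c * (1 - E)‖ = ‖E * c + c * E - E * c * E‖ := by congr 1; noncomm_ring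
    _ ≤ ‖E * c‖ + ‖c * E‖ + ‖E * c * E‖ := norm_sub_le_of_le (norm_add_le _ _) le_rfl
    _ ≤ 2 * √(‖c‖ * ‖E * b * E‖) + ‖E * b * E‖ := by rw [hEc]; linarith

theorem norm_one_sub_cfc_mul_mul_one_sub_cfc_le {b : A} (hb : 0 ≤ b) {δ : ℝ} (hδ : 0 < δ) :
    ‖(1 - cfc (fun t : ℝ ↦ t / (t + δ)) b) * b * (1 - cfc (fun t : ℝ ↦ t / (t + δ)) b)‖ ≤ δ := by
  have hσ : ∀ t ∈ spectrum ℝ b, 0 ≤ t := fun t ht ↦ spectrum_nonneg_of_nonneg hb ht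
  have hf : ContinuousOn (fun t : ℝ ↦ t / (t + δ)) (spectrum ℝ b) :=
    continuousOn_id.div (by fun_prop) fun t ht ↦ by have := hσ t ht; positivity
  have hcfc : (1 - cfc (fun t : ℝ ↦ t / (t + δ)) b) * b * (1 - cfc (fun t : ℝ ↦ t / (t + δ)) b) =
      cfc (fun t : ℝ ↦ (1 - t / (t + δ)) * t * (1 - t / (t + δ))) b := by
    have hg : ContinuousOn (fun t : ℝ ↦ 1 - t / (t + δ)) (spectrum ℝ b) := continuousOn_const.sub hf
    rw [cfc_mul (fun t ↦ (1 - t / (t + δ)) * t) _ b (hg.mul continuousOn_id) hg,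
      cfc_mul _ (fun t ↦ t) b hg continuousOn_id, cfc_sub (fun _ ↦ 1) _ b continuousOn_const hf,
      cfc_const_one ℝ b, cfc_id' ℝ b]
  rw [hcfc]
  refine norm_cfc_le hδ.le fun t ht ↦ ?_
  have ht₀ := hσ t ht
  have hval : (1 - t / (t + δ)) * t * (1 - t / (t + δ)) = t * δ ^ 2 / (t + δ) ^ 2 := by
    field_simp
    ring
  rw [hval, Real.norm_of_nonneg (by positivity), div_le_iff₀ (by positivity)]
  nlinarith [mul_nonneg ht₀ hδ.le]

end Unital

section NonUnital

variable {C : Type*} [NonUnitalCStarAlgebra C] [PartialOrder C] [StarOrderedRing C]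

theorem norm_sub_cfcₙ_mul_mul_cfcₙ_le {b c : C} (hc : 0 ≤ c) (hcb : c ≤ b) {δ : ℝ} (hδ : 0 < δ) :
    ‖c - cfcₙ (fun t : ℝ ↦ t / (t + δ)) b * c * cfcₙ (fun t : ℝ ↦ t / (t + δ)) b‖ ≤
      2 * √(‖c‖ * δ) + δ := by
  have hb : 0 ≤ b := hc.trans hcb
  rw [← Unitization.norm_inr (𝕜 := ℂ), Unitization.inr_sub, Unitization.inr_mul,
    Unitization.inr_mul, Unitization.real_cfcₙ_eq_cfc_inr b _ (by simp)]
  set E := 1 - cfc (fun t : ℝ ↦ t / (t + δ)) (b : Unitization ℂ C)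
  have hE : IsSelfAdjoint E := .sub (.one _) (cfc_predicate _ _)
  have hEbE : ‖E * b * E‖ ≤ δ :=
    norm_one_sub_cfc_mul_mul_one_sub_cfc_le (Unitization.inr_nonneg_iff.mpr hb) hδ
  have hcb' : (c : Unitization ℂ C) ≤ b :=
    (Unitization.inr_le_iff c b hc.isSelfAdjoint hb.isSelfAdjoint).mpr hcb
  calc _ = ‖(c : Unitization ℂ C) - (1 - E) * c * (1 - E)‖ := by rw [sub_sub_cancel]
    _ ≤ 2 * √(‖(c : Unitization ℂ C)‖ * ‖E * b * E‖) + ‖E * b * E‖ :=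
      norm_sub_one_sub_mul_mul_one_sub_le (Unitization.inr_nonneg_iff.mpr hc) hcb' hE
    _ ≤ 2 * √(‖c‖ * δ) + δ := by rw [Unitization.norm_inr]; gcongr

theorem tendsto_cfcₙ_mul_mul_cfcₙ_of_le {b c : C} (hc : 0 ≤ c) (hcb : c ≤ b) :
    Tendsto (fun δ : ℝ ↦ cfcₙ (fun t : ℝ ↦ t / (t + δ)) b * c * cfcₙ (fun t : ℝ ↦ t / (t + δ)) b)
      (𝓝[>] 0) (𝓝 c) := by
  have hbound : Tendsto (fun δ : ℝ ↦ 2 * √(‖c‖ * δ) + δ) (𝓝[>] 0) (𝓝 0) := by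
    refine tendsto_nhdsWithin_of_tendsto_nhds ?_
    have : Continuous (fun δ : ℝ ↦ 2 * √(‖c‖ * δ) + δ) := by fun_prop
    simpa using this.tendsto 0
  refine tendsto_iff_norm_sub_tendsto_zero.mpr (squeeze_zero_norm' ?_ hbound)
  filter_upwards [self_mem_nhdsWithin] with δ (hδ : 0 < δ)
  rw [norm_norm, norm_sub_rev]
  exact norm_sub_cfcₙ_mul_mul_cfcₙ_le hc hcb hδ

theorem mem_closure_image_star_mul_mul_self_of_le (H : NonUnitalStarSubalgebra ℂ C) {b c : C}
    (hb : b ∈ closure (H : Set C)) (hc : 0 ≤ c) (hcb : c ≤ b) :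
    c ∈ closure ((fun h ↦ star h * c * h) '' H) := by
  have : IsClosed (H.topologicalClosure : Set C) := H.isClosed_topologicalClosure
  have hmem : c ∈ closure ((fun h ↦ star h * c * h) '' closure H) := by
    refine mem_closure_of_tendsto (tendsto_cfcₙ_mul_mul_cfcₙ_of_le hc hcb) (.of_forall fun δ ↦ ?_)
    refine ⟨cfcₙ (fun t : ℝ ↦ t / (t + δ)) b, cfcₙ_mem (s := H.topologicalClosure) _ hb, ?_⟩
    simp only [(cfcₙ_predicate (fun t : ℝ ↦ t / (t + δ)) b).star_eq]
  have hcont : Continuous (fun h ↦ star h * c * h) := by fun_prop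
  simpa using closure_mono (image_closure_subset_closure_image hcont) hmem

end NonUnital

theorem stmt5_general
    {C : Type*} [NonUnitalCStarAlgebra C] [PartialOrder C] [StarOrderedRing C]
    (H : NonUnitalStarSubalgebra ℂ C)
    (hher : ∀ c h : C, h ∈ H → 0 ≤ c → c ≤ h → c ∈ H) :
    (∀ h₁ ∈ H, ∀ h₂ ∈ H, ∀ c : C, h₁ * c * h₂ ∈ H) ∧
    (∀ d ∈ closure
        (Submodule.span ℂ {x : C | ∃ h₁ ∈ H, ∃ h₂ ∈ H, ∃ c : C, x = h₁ * c * h₂} : Set C),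
      0 ≤ d →
      d ∈ closure
        ((Submodule.span ℂ {x : C | ∃ h₁ ∈ H, ∃ h₂ ∈ H, ∃ c : C, x = h₁ * c * h₂} : Set C) ∩
          {c : C | 0 ≤ c})) ∧
    ((∀ a ∈ closure (H : Set C), ∀ b ∈ closure (H : Set C),
        a + b ∈ closure (H : Set C) ∧ a * b ∈ closure (H : Set C) ∧
        star a ∈ closure (H : Set C) ∧ ∀ z : ℂ, z • a ∈ closure (H : Set C)) ∧
      (∀ c b : C, b ∈ closure (H : Set C) → 0 ≤ c → c ≤ b → c ∈ closure (H : Set C))) := by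
  have hHCH (h₁ : C) (h₁_mem : h₁ ∈ H) (h₂ : C) (h₂_mem : h₂ ∈ H) (c : C) : h₁ * c * h₂ ∈ H :=
    mul_mul_mem_of_hereditary hher h₁_mem h₂_mem c
  have hspan_le : (Submodule.span ℂ {x : C | ∃ h₁ ∈ H, ∃ h₂ ∈ H, ∃ c : C, x = h₁ * c * h₂} :
      Set C) ⊆ H := by
    refine Submodule.span_le (p := H.toNonUnitalSubalgebra.toSubmodule).mpr ?_
    rintro _ ⟨h₁, h₁_mem, h₂, h₂_mem, c, rfl⟩
    exact hHCH h₁ h₁_mem h₂ h₂_mem c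
  refine ⟨hHCH, fun d hd hd₀ ↦ ?_, fun a ha b hb ↦ ?_, fun c b hb hc hcb ↦ ?_⟩
  · refine closure_mono ?_
      (mem_closure_image_star_mul_mul_self_of_le H (closure_mono hspan_le hd) hd₀ le_rfl)
    rintro _ ⟨h, hh, rfl⟩
    exact ⟨Submodule.subset_span ⟨star h, star_mem hh, h, hh, d, rfl⟩,
      star_left_conjugate_nonneg hd₀ h⟩
  · change a ∈ H.topologicalClosure at ha
    exact ⟨add_mem ha hb, mul_mem ha hb, star_mem ha, fun z ↦ SMulMemClass.smul_mem z ha⟩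
  · refine closure_mono ?_ (mem_closure_image_star_mul_mul_self_of_le H hb hc hcb)
    rintro _ ⟨h, hh, rfl⟩
    exact hHCH _ (star_mem hh) _ hh c

/-- Let `ℋ` be a (not necessarily closed) *-subalgebra of a C*-algebra `C`
which is the span of its positive part `ℋ⁺ = ℋ ∩ C⁺`, with `ℋ⁺` a hereditary cone in `C`.
Then (i) `ℋCℋ ⊆ ℋ`; (ii) with `D` the closure of `span ℋCℋ`, the set `(span ℋCℋ) ∩ C⁺`
is dense in `D⁺`; (iii) the closure of `ℋ` is a hereditary (closed *-sub)algebra of `C`. -/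
theorem stmt5
    {C : Type*} [NonUnitalCStarAlgebra C] [PartialOrder C] [StarOrderedRing C]
    (H : NonUnitalStarSubalgebra ℂ C)
    (hspan : ∀ h ∈ H, h ∈ Submodule.span ℂ {c : C | c ∈ H ∧ 0 ≤ c})
    (hher : ∀ c h : C, h ∈ H → 0 ≤ c → c ≤ h → c ∈ H) :
    (∀ h₁ ∈ H, ∀ h₂ ∈ H, ∀ c : C, h₁ * c * h₂ ∈ H) ∧
    (∀ d ∈ closure
        (Submodule.span ℂ {x : C | ∃ h₁ ∈ H, ∃ h₂ ∈ H, ∃ c : C, x = h₁ * c * h₂} : Set C),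
      0 ≤ d →
      d ∈ closure
        ((Submodule.span ℂ {x : C | ∃ h₁ ∈ H, ∃ h₂ ∈ H, ∃ c : C, x = h₁ * c * h₂} : Set C) ∩
          {c : C | 0 ≤ c})) ∧
    ((∀ a ∈ closure (H : Set C), ∀ b ∈ closure (H : Set C),
        a + b ∈ closure (H : Set C) ∧ a * b ∈ closure (H : Set C) ∧
        star a ∈ closure (H : Set C) ∧ ∀ z : ℂ, z • a ∈ closure (H : Set C)) ∧
      (∀ c b : C, b ∈ closure (H : Set C) → 0 ≤ c → c ≤ b → c ∈ closure (H : Set C))) :=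
  stmt5_general H hher
end

section
/- Let G be a locally compact Hausdorff group with left Haar measure acting continuously on a locally compact Hausdorff space M. Then the linear span of the α-proper positive elements of C₀(M,ℂ) is dense in C₀(M,ℂ) if and only if the action of G on M is proper, i.e., the map G × M → M × M, (x,m) ↦ (x•m, m), is a proper map (preimages of compact sets are compact). -/
/-!
If the action is proper, a compactly supported `f ≥ 0` is `α`-proper, with limit its orbit
integral `F(m) = ∫ f(x⁻¹ • m) dx`: on a compact set `A` we have `p_λ(f) = F` as soon as `λ = 1`
on the compact set of `x` for which `x • tsupport f` meets `A`, and off `A` the factor `k` is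
small. Compactly supported functions are dense in `C₀(M)` and each is a combination of four
nonnegative ones.

Conversely, if the preimage of a compact `K` is not compact, there are `(x • m, m) ∈ K` with `x`
escaping to infinity, and the points `x • m` cluster at some `n₀`. Let `h ≥ 0` be `α`-proper
with limit `F`. Then `p_λ(h) ≤ F`, and splitting `λ` into the indicators of a compact `C` and of
its translate `x⁻¹C` shows that `F(x • m)` is small for `x` far out. Hence `F(n₀) ≤ 0`, which
forces `h(n₀) = 0`; so every element of the span vanishes at `n₀`, and the span is not dense.
-/

open MeasureTheory Filter Topology
open scoped ZeroAtInfty BoundedContinuousFunction ComplexOrder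

/-- The directed set `ℬ(G)` of bounded measurable compactly supported functions
`λ : G → ℝ` with `0 ≤ λ ≤ 1`, ordered pointwise. -/
abbrev RieffelB (G : Type*) [TopologicalSpace G] [MeasurableSpace G] : Type _ :=
  {lam : G → ℝ // Measurable lam ∧ HasCompactSupport lam ∧ 0 ≤ lam ∧ lam ≤ 1}

/-- `p_λ(f)(m) = ∫ λ(x) f(x⁻¹ • m) dx`. -/
noncomputable def pLamC0 {G : Type*} [Group G] [TopologicalSpace G] [MeasurableSpace G]
    {M : Type*} [TopologicalSpace M] [MulAction G M]
    (μ : Measure G) (lam : RieffelB G) (f : C₀(M, ℂ)) : M → ℂ :=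
  fun m => ∫ x, ((lam.1 x : ℝ) : ℂ) * f (x⁻¹ • m) ∂μ

/-- A nonnegative `h ∈ C₀(M, ℂ)` is `α`-proper if there is `F ∈ C_b(M, ℂ)` such that
for every `k ∈ C₀(M, ℂ)` the net `(k · p_λ(h))_{λ ∈ ℬ(G)}` converges uniformly to `k · F`. -/
def IsProperC0 {G : Type*} [Group G] [TopologicalSpace G] [MeasurableSpace G]
    {M : Type*} [TopologicalSpace M] [MulAction G M]
    (μ : Measure G) (h : C₀(M, ℂ)) : Prop :=
  ∃ F : M →ᵇ ℂ, ∀ k : C₀(M, ℂ), ∀ ε > (0 : ℝ), ∃ lam₀ : RieffelB G,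
    ∀ lam : RieffelB G, lam₀ ≤ lam →
      ∀ m : M, ‖k m * pLamC0 μ lam h m - k m * F m‖ ≤ ε

open scoped Pointwise

/-- Strict convergence of `p_λ(h)` to `F`, so that `IsProperC0 μ h` unfolds to
`∃ F, PLamTendstoStrictly μ h F`. -/
def PLamTendstoStrictly {G : Type*} [Group G] [TopologicalSpace G] [MeasurableSpace G]
    {M : Type*} [TopologicalSpace M] [MulAction G M]
    (μ : Measure G) (h : C₀(M, ℂ)) (F : M →ᵇ ℂ) : Prop :=
  ∀ k : C₀(M, ℂ), ∀ ε > (0 : ℝ), ∃ lam₀ : RieffelB G,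
    ∀ lam : RieffelB G, lam₀ ≤ lam → ∀ m : M, ‖k m * pLamC0 μ lam h m - k m * F m‖ ≤ ε

namespace ZeroAtInftyContinuousMap

variable {M E : Type*} [TopologicalSpace M]

def ofHasCompactSupport [Zero E] [TopologicalSpace E] (f : M → E) (hc : Continuous f)
    (hs : HasCompactSupport f) : C₀(M, E) :=
  ⟨⟨f, hc⟩, hs.is_zero_at_infty⟩

@[simp]
lemma ofHasCompactSupport_apply [Zero E] [TopologicalSpace E] (f : M → E) (hc : Continuous f)
    (hs : HasCompactSupport f) (m : M) : ofHasCompactSupport f hc hs m = f m :=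
  rfl

variable [NormedAddCommGroup E]

lemma norm_apply_le_norm (f : C₀(M, E)) (m : M) : ‖f m‖ ≤ ‖f‖ := by
  rw [← norm_toBCF_eq_norm]
  exact f.toBCF.norm_coe_le_norm m

lemma norm_le_of_forall_le {f : C₀(M, E)} {C : ℝ} (hC : 0 ≤ C) (h : ∀ m, ‖f m‖ ≤ C) :
    ‖f‖ ≤ C := by
  rw [← norm_toBCF_eq_norm]
  exact (BoundedContinuousFunction.norm_le hC).2 h

lemma exists_isCompact_forall_norm_lt (f : C₀(M, E)) {ε : ℝ} (hε : 0 < ε) :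
    ∃ A : Set M, IsCompact A ∧ ∀ m ∉ A, ‖f m‖ < ε := by
  have : ∀ᶠ m in cocompact M, ‖f m‖ < ε := by
    simpa using Metric.tendsto_nhds.1 (zero_at_infty f) ε hε
  obtain ⟨A, hA, hfA⟩ := hasBasis_cocompact.eventually_iff.1 this
  exact ⟨A, hA, fun m hm => hfA hm⟩

variable [LocallyCompactSpace M] [T2Space M]

lemma exists_eqOn_one {L : Set M} (hL : IsCompact L) :
    ∃ k : C₀(M, ℂ), ∀ m ∈ L, k m = 1 := by
  obtain ⟨φ, hφL, -, hφc, -⟩ :=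
    exists_continuous_one_zero_of_isCompact hL isClosed_empty (Set.disjoint_empty L)
  refine ⟨ofHasCompactSupport (fun m => (φ m : ℂ)) (by fun_prop)
    (hφc.comp_left Complex.ofReal_zero), fun m hm => ?_⟩
  simp [hφL hm]

lemma dense_setOf_hasCompactSupport [NormedSpace ℝ E] :
    Dense {g : C₀(M, E) | HasCompactSupport g} := by
  refine Metric.dense_iff.2 fun g r hr => ?_
  obtain ⟨A, hA, hgA⟩ := g.exists_isCompact_forall_norm_lt (half_pos hr)
  obtain ⟨φ, hφA, -, hφc, hφ01⟩ :=
    exists_continuous_one_zero_of_isCompact hA isClosed_empty (Set.disjoint_empty A)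
  have hs : HasCompactSupport fun m => φ m • g m := hφc.smul_right
  refine ⟨ofHasCompactSupport _ (by fun_prop) hs, ?_, hs⟩
  rw [Metric.mem_ball, dist_eq_norm]
  refine (norm_le_of_forall_le (half_pos hr).le fun m => ?_).trans_lt (half_lt_self hr)
  have hφ : ‖φ m - 1‖ ≤ 1 := by
    rw [Real.norm_eq_abs, abs_le]; constructor <;> linarith [(hφ01 m).1, (hφ01 m).2]
  by_cases hm : m ∈ A
  · simp [hφA hm]; positivity
  · calc ‖φ m • g m - g m‖ = ‖φ m - 1‖ * ‖g m‖ := by rw [← norm_smul, sub_smul, one_smul]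
      _ ≤ 1 * (r / 2) := by gcongr; exact (hgA m hm).le
      _ = r / 2 := one_mul _

end ZeroAtInftyContinuousMap

namespace RieffelB

variable {G : Type*} [TopologicalSpace G] [MeasurableSpace G]

lemma integrable (μ : Measure G) [IsFiniteMeasureOnCompacts μ] (lam : RieffelB G) :
    Integrable lam.1 μ := by
  refine IntegrableOn.integrable_of_forall_notMem_eq_zero (s := tsupport lam.1) ?_
    fun x hx => image_eq_zero_of_notMem_tsupport hx
  refine Measure.integrableOn_of_bounded lam.2.2.1.isCompact.measure_lt_top.ne
    lam.2.1.aestronglyMeasurable (M := 1) (Eventually.of_forall fun x => ?_)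
  rw [Real.norm_of_nonneg (lam.2.2.2.1 x)]
  exact lam.2.2.2.2 x

variable [OpensMeasurableSpace G]

noncomputable def indicator (C : Set G) (hC : IsCompact C) (hCl : IsClosed C) : RieffelB G :=
  ⟨C.indicator 1, measurable_one.indicator hCl.measurableSet,
    HasCompactSupport.intro' hC hCl fun _ hx => Set.indicator_of_notMem hx _,
    Set.indicator_nonneg fun _ _ => zero_le_one,
    Set.indicator_le' (fun _ _ => le_rfl) fun _ _ => zero_le_one⟩

@[simp]
lemma indicator_apply (C : Set G) (hC : IsCompact C) (hCl : IsClosed C) :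
    (indicator C hC hCl).1 = C.indicator 1 :=
  rfl

lemma le_indicator {C : Set G} (hC : IsCompact C) (hCl : IsClosed C) (lam : RieffelB G)
    (h : tsupport lam.1 ⊆ C) : lam ≤ indicator C hC hCl := by
  intro x
  by_cases hx : x ∈ C
  · simpa [hx] using lam.2.2.2.2 x
  · simp [hx, image_eq_zero_of_notMem_tsupport fun h' => hx (h h')]

lemma apply_eq_one_of_indicator_le {C : Set G} {hC : IsCompact C} {hCl : IsClosed C}
    {lam : RieffelB G} (h : indicator C hC hCl ≤ lam) {x : G} (hx : x ∈ C) : lam.1 x = 1 :=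
  le_antisymm (lam.2.2.2.2 x) (by simpa [hx] using h x)

instance : IsDirected (RieffelB G) (· ≤ ·) where
  directed a b :=
    ⟨indicator _ (a.2.2.1.union b.2.2.1) ((isClosed_tsupport _).union (isClosed_tsupport _)),
      le_indicator _ _ a Set.subset_union_left, le_indicator _ _ b Set.subset_union_right⟩

end RieffelB

section OrbitIntegral

variable {G : Type*} [Group G] [MeasurableSpace G] {μ : Measure G} {M : Type*} [MulAction G M]
  {E : Type*} [NormedAddCommGroup E] [NormedSpace ℝ E]

variable (μ) in
noncomputable def orbitIntegral (u : M → E) (m : M) : E :=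
  ∫ x, u (x⁻¹ • m) ∂μ

lemma orbitIntegral_smul [MeasurableMul G] [μ.IsMulLeftInvariant] (u : M → E) (g : G) (m : M) :
    orbitIntegral μ u (g • m) = orbitIntegral μ u m := by
  rw [orbitIntegral, orbitIntegral, ← integral_mul_left_eq_self _ g]
  simp [mul_smul]

end OrbitIntegral

lemma apply_inv_smul_eq_zero_of_notMem {G M E : Type*} [Group G] [MulAction G M]
    [TopologicalSpace M] [Zero E] {u : M → E} {A : Set M} {m : M} (hm : m ∈ A) {x : G}
    (hx : x ∉ {g : G | (g • tsupport u ∩ A).Nonempty}) : u (x⁻¹ • m) = 0 := by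
  by_contra hne
  exact hx ⟨m, ⟨x⁻¹ • m, subset_tsupport _ hne, smul_inv_smul x m⟩, hm⟩

section PLam

variable {G : Type*} [Group G] [TopologicalSpace G] [IsTopologicalGroup G]
  [MeasurableSpace G] [BorelSpace G] {μ : Measure G}
  {M : Type*} [TopologicalSpace M] [MulAction G M]

lemma pLamC0_indicator_preimage_mul_left [μ.IsMulLeftInvariant] {C : Set G} (x : G)
    (hC : IsCompact C) (hCl : IsClosed C) (hC' : IsCompact ((x * ·) ⁻¹' C))
    (hCl' : IsClosed ((x * ·) ⁻¹' C)) (f : C₀(M, ℂ)) (m : M) :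
    pLamC0 μ (RieffelB.indicator ((x * ·) ⁻¹' C) hC' hCl') f m
      = pLamC0 μ (RieffelB.indicator C hC hCl) f (x • m) := by
  rw [pLamC0, pLamC0]
  conv_rhs => rw [← integral_mul_left_eq_self _ x]
  congr 1 with y
  by_cases hy : x * y ∈ C <;> simp [hy, mul_smul]

variable [ContinuousSMul G M]

lemma integrable_pLamC0_integrand [IsFiniteMeasureOnCompacts μ] (lam : RieffelB G)
    (f : C₀(M, ℂ)) (m : M) : Integrable (fun x => ((lam.1 x : ℝ) : ℂ) * f (x⁻¹ • m)) μ :=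
  (lam.integrable μ).ofReal.mul_bdd
    (by fun_prop : Continuous fun x : G => f (x⁻¹ • m)).aestronglyMeasurable
    (Eventually.of_forall fun _ => f.norm_apply_le_norm _)

lemma re_pLamC0 [IsFiniteMeasureOnCompacts μ] (lam : RieffelB G) (f : C₀(M, ℂ)) (m : M) :
    (pLamC0 μ lam f m).re = ∫ x, lam.1 x * (f (x⁻¹ • m)).re ∂μ := by
  rw [pLamC0, ← Complex.reCLM_apply, ← ContinuousLinearMap.integral_comp_comm _
    (integrable_pLamC0_integrand lam f m)]
  simp

lemma re_pLamC0_mono [IsFiniteMeasureOnCompacts μ] {lam lam' : RieffelB G} (h : lam ≤ lam')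
    {f : C₀(M, ℂ)} (hf : ∀ m, 0 ≤ f m) (m : M) :
    (pLamC0 μ lam f m).re ≤ (pLamC0 μ lam' f m).re := by
  have hint : ∀ lam : RieffelB G, Integrable (fun x => lam.1 x * (f (x⁻¹ • m)).re) μ :=
    fun lam => by simpa using (integrable_pLamC0_integrand (μ := μ) lam f m).re
  rw [re_pLamC0, re_pLamC0]
  exact integral_mono (hint lam) (hint lam') fun x =>
    mul_le_mul_of_nonneg_right (h x) (Complex.nonneg_iff.1 (hf _)).1

lemma pLamC0_indicator_union [IsFiniteMeasureOnCompacts μ] {C D : Set G} (hC : IsCompact C)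
    (hCl : IsClosed C) (hD : IsCompact D) (hDl : IsClosed D) (hCD : Disjoint C D)
    (f : C₀(M, ℂ)) (m : M) :
    pLamC0 μ (RieffelB.indicator (C ∪ D) (hC.union hD) (hCl.union hDl)) f m
      = pLamC0 μ (RieffelB.indicator C hC hCl) f m
        + pLamC0 μ (RieffelB.indicator D hD hDl) f m := by
  rw [pLamC0, pLamC0, pLamC0, ← integral_add (integrable_pLamC0_integrand _ f m)
    (integrable_pLamC0_integrand _ f m)]
  congr 1 with x
  simp [Set.indicator_union_of_disjoint hCD, add_mul]

lemma exists_re_pLamC0_pos [IsFiniteMeasureOnCompacts μ] [LocallyCompactSpace G]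
    [μ.IsOpenPosMeasure] {f : C₀(M, ℂ)} (hf : ∀ m, 0 ≤ f m) {n : M} (hn : f n ≠ 0) :
    ∃ lam : RieffelB G, 0 < (pLamC0 μ lam f n).re := by
  set g : G → ℝ := fun y => (f (y⁻¹ • n)).re
  have hg0 : ∀ y, 0 ≤ g y := fun y => (Complex.nonneg_iff.1 (hf _)).1
  have hg1 : 0 < g 1 := by simpa [g] using (Complex.pos_iff.1 ((hf n).lt_of_ne' hn)).1
  obtain ⟨V, hV, hVcl, h1V, hVpos⟩ := exists_compact_closed_between isCompact_singleton
    (isOpen_lt continuous_const (by fun_prop : Continuous g)) (Set.singleton_subset_iff.2 hg1)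
  refine ⟨RieffelB.indicator V hV hVcl, ?_⟩
  rw [re_pLamC0]
  refine (integral_pos_iff_support_of_nonneg (fun y => mul_nonneg
    ((RieffelB.indicator V hV hVcl).2.2.2.1 y) (hg0 y)) ?_).2 ?_
  · simpa using (integrable_pLamC0_integrand (μ := μ) (RieffelB.indicator V hV hVcl) f n).re
  · refine (isOpen_interior.measure_pos μ ⟨1, h1V rfl⟩).trans_le (measure_mono fun y hy => ?_)
    have hyV := interior_subset hy
    simpa [hyV] using (hVpos hyV).ne'

lemma norm_pLamC0_le_orbitIntegral [IsFiniteMeasureOnCompacts μ] {f : C₀(M, ℂ)} {m : M}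
    (hint : Integrable (fun x : G => ‖f (x⁻¹ • m)‖) μ) (lam : RieffelB G) :
    ‖pLamC0 μ lam f m‖ ≤ orbitIntegral μ (fun n => ‖f n‖) m := by
  refine (norm_integral_le_integral_norm _).trans
    (integral_mono (integrable_pLamC0_integrand lam f m).norm hint fun x => ?_)
  rw [norm_mul, Complex.norm_real, Real.norm_of_nonneg (lam.2.2.2.1 x)]
  exact mul_le_of_le_one_left (norm_nonneg _) (lam.2.2.2.2 x)

end PLam

lemma pLamC0_eq_orbitIntegral {G : Type*} [Group G] [TopologicalSpace G] [MeasurableSpace G]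
    {μ : Measure G} {M : Type*} [TopologicalSpace M] [MulAction G M] {f : C₀(M, ℂ)}
    {A : Set M} {m : M} (hm : m ∈ A)
    {lam : RieffelB G} (hlam : ∀ x ∈ {g : G | (g • tsupport f ∩ A).Nonempty}, lam.1 x = 1) :
    pLamC0 μ lam f m = orbitIntegral μ f m := by
  refine integral_congr_ae (Eventually.of_forall fun x => ?_)
  by_cases hx : x ∈ {g : G | (g • tsupport f ∩ A).Nonempty}
  · simp [hlam x hx]
  · simp [apply_inv_smul_eq_zero_of_notMem hm hx]

section Escape

variable {G : Type*} [Group G] [TopologicalSpace G]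
  {M : Type*} [TopologicalSpace M] [T2Space M] [MulAction G M] [ContinuousSMul G M]

variable (G) in
def escapingTranslates (K : Set (M × M)) : Filter M :=
  map (fun p : G × M => p.1 • p.2)
    (comap Prod.fst (cocompact G) ⊓ 𝓟 ((fun p : G × M => (p.1 • p.2, p.2)) ⁻¹' K))

lemma exists_clusterPt_escapingTranslates {K : Set (M × M)} (hK : IsCompact K)
    (hP : ¬ IsCompact ((fun p : G × M => (p.1 • p.2, p.2)) ⁻¹' K)) :
    ∃ n₀, ClusterPt n₀ (escapingTranslates G K) := by
  set P := (fun p : G × M => (p.1 • p.2, p.2)) ⁻¹' K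
  have hne : (comap Prod.fst (cocompact G) ⊓ 𝓟 P).NeBot := by
    refine inf_principal_neBot_iff.2 fun U hU => ?_
    obtain ⟨t, ht, htU⟩ := mem_comap.1 hU
    obtain ⟨C, hC, hCt⟩ := hasBasis_cocompact.mem_iff.1 ht
    by_contra hempty
    refine hP ((hC.prod (hK.image continuous_snd)).of_isClosed_subset
      (hK.isClosed.preimage (by fun_prop)) fun p hp => ⟨?_, _, hp, rfl⟩)
    by_contra hpC
    exact hempty ⟨p, htU (hCt hpC), hp⟩
  have : (escapingTranslates G K).NeBot := hne.map _
  obtain ⟨n₀, -, hn₀⟩ := (hK.image continuous_fst).exists_clusterPt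
    (f := escapingTranslates G K) (le_principal_iff.2 (mem_map.2
      (mem_inf_of_right (mem_principal.2 fun p hp => ⟨_, hp, rfl⟩))))
  exact ⟨n₀, hn₀⟩

end Escape

section Strict

variable {G : Type*} [Group G] [TopologicalSpace G] [MeasurableSpace G] {μ : Measure G}
  {M : Type*} [TopologicalSpace M] [LocallyCompactSpace M] [T2Space M]
  [MulAction G M] {h : C₀(M, ℂ)} {F : M →ᵇ ℂ}

lemma PLamTendstoStrictly.exists_forall_abs_re_sub_le (hF : PLamTendstoStrictly μ h F) {L : Set M}
    (hL : IsCompact L) {ε : ℝ} (hε : 0 < ε) :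
    ∃ lam₀ : RieffelB G, ∀ lam, lam₀ ≤ lam →
      ∀ m ∈ L, |(pLamC0 μ lam h m).re - (F m).re| ≤ ε := by
  obtain ⟨k, hk⟩ := ZeroAtInftyContinuousMap.exists_eqOn_one hL
  obtain ⟨lam₀, hlam₀⟩ := hF k ε hε
  refine ⟨lam₀, fun lam hlam m hm => ?_⟩
  have hclose := hlam₀ lam hlam m
  rw [hk m hm, one_mul, one_mul] at hclose
  exact (Complex.sub_re _ _ ▸ Complex.abs_re_le_norm _).trans hclose

variable [IsTopologicalGroup G] [BorelSpace G] [ContinuousSMul G M] [IsFiniteMeasureOnCompacts μ]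

lemma PLamTendstoStrictly.re_pLamC0_le (hF : PLamTendstoStrictly μ h F) (hh : ∀ m, 0 ≤ h m)
    (lam : RieffelB G) (m : M) : (pLamC0 μ lam h m).re ≤ (F m).re := by
  refine le_of_forall_pos_le_add fun ε hε => ?_
  obtain ⟨lam₀, hlam₀⟩ := hF.exists_forall_abs_re_sub_le isCompact_singleton hε
  obtain ⟨lam', hlam, hlam₀'⟩ := exists_ge_ge lam lam₀
  linarith [re_pLamC0_mono (μ := μ) hlam hh m, (abs_le.1 (hlam₀ lam' hlam₀' m rfl)).2]

lemma PLamTendstoStrictly.apply_eq_zero_of_re_nonpos [LocallyCompactSpace G] [μ.IsOpenPosMeasure]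
    (hF : PLamTendstoStrictly μ h F) (hh : ∀ m, 0 ≤ h m) {n : M} (hn : (F n).re ≤ 0) :
    h n = 0 := by
  by_contra hne
  obtain ⟨lam, hlam⟩ := exists_re_pLamC0_pos (μ := μ) hh hne
  linarith [hF.re_pLamC0_le hh lam n]

/-- For `λ` the indicator of `C ∪ x⁻¹C`, with `C = tsupport λ₀` and `x ∉ C C⁻¹`, the value
`p_λ(h)(m)` splits as `p_C(h)(m) + p_C(h)(x • m)`; both terms approximate `F`, while the sum
is still at most `F(m)`. -/
lemma PLamTendstoStrictly.exists_isCompact_forall_re_smul_le [μ.IsMulLeftInvariant]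
    (hF : PLamTendstoStrictly μ h F) (hh : ∀ m, 0 ≤ h m) {L : Set M} (hL : IsCompact L)
    {ε : ℝ} (hε : 0 < ε) :
    ∃ C : Set G, IsCompact C ∧ ∀ x ∉ C, ∀ m ∈ L, x • m ∈ L → (F (x • m)).re ≤ ε := by
  obtain ⟨lam₀, hlam₀⟩ := hF.exists_forall_abs_re_sub_le hL (half_pos hε)
  set C := tsupport lam₀.1
  have hC : IsCompact C := lam₀.2.2.1
  have hCcl : IsClosed C := isClosed_tsupport _
  refine ⟨C * C⁻¹, hC.mul hC.inv, fun x hx m hm hxm => ?_⟩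
  set D := (x * ·) ⁻¹' C
  have hD : IsCompact D := (Homeomorph.mulLeft x).isCompact_preimage.2 hC
  have hDcl : IsClosed D := hCcl.preimage (continuous_const_mul x)
  have hCD : Disjoint C D := Set.disjoint_left.2 fun y hy hy' =>
    hx ⟨x * y, hy', y⁻¹, Set.inv_mem_inv.2 hy, by group⟩
  have hle : lam₀ ≤ RieffelB.indicator C hC hCcl := RieffelB.le_indicator _ _ _ subset_rfl
  have hsplit := hF.re_pLamC0_le hh (RieffelB.indicator (C ∪ D) (hC.union hD) (hCcl.union hDcl)) m
  rw [pLamC0_indicator_union hC hCcl hD hDcl hCD,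
    pLamC0_indicator_preimage_mul_left x hC hCcl, Complex.add_re] at hsplit
  linarith [(abs_le.1 (hlam₀ _ hle m hm)).1, (abs_le.1 (hlam₀ _ hle (x • m) hxm)).1]

variable [μ.IsMulLeftInvariant]

lemma PLamTendstoStrictly.re_nonpos_of_clusterPt (hF : PLamTendstoStrictly μ h F)
    (hh : ∀ m, 0 ≤ h m) {K : Set (M × M)} (hK : IsCompact K) {n₀ : M}
    (hn₀ : ClusterPt n₀ (escapingTranslates G K)) : (F n₀).re ≤ 0 := by
  refine le_of_forall_pos_le_add fun ε hε => ?_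
  rw [zero_add]
  obtain ⟨C, hC, hCF⟩ := hF.exists_isCompact_forall_re_smul_le hh
    ((hK.image continuous_fst).union (hK.image continuous_snd)) hε
  have hmem : {n | (F n).re ≤ ε} ∈ escapingTranslates G K := by
    refine mem_map.2 (mem_inf_of_inter (preimage_mem_comap hC.compl_mem_cocompact)
      (mem_principal_self _) ?_)
    rintro ⟨x, m⟩ ⟨hx, hxm⟩
    exact hCF x hx m (Or.inr ⟨_, hxm, rfl⟩) (Or.inl ⟨_, hxm, rfl⟩)
  exact (isClosed_le (by fun_prop) continuous_const).closure_subset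
    (hn₀.mem_closure_of_mem _ hmem)

lemma isCompact_preimage_of_dense_span [LocallyCompactSpace G] [μ.IsOpenPosMeasure]
    (hdense : Dense (↑(Submodule.span ℂ
      {h : C₀(M, ℂ) | (∀ m : M, 0 ≤ h m) ∧ IsProperC0 μ h}) : Set C₀(M, ℂ)))
    {K : Set (M × M)} (hK : IsCompact K) :
    IsCompact ((fun p : G × M => (p.1 • p.2, p.2)) ⁻¹' K) := by
  by_contra hP
  obtain ⟨n₀, hn₀⟩ := exists_clusterPt_escapingTranslates hK hP
  have hvanish : ∀ h ∈ Submodule.span ℂ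
      {h : C₀(M, ℂ) | (∀ m : M, 0 ≤ h m) ∧ IsProperC0 μ h}, h n₀ = 0 := by
    intro h hh
    induction hh using Submodule.span_induction with
    | mem j hj =>
      obtain ⟨hj0, F, hF⟩ := hj
      exact PLamTendstoStrictly.apply_eq_zero_of_re_nonpos (μ := μ) hF hj0
        (PLamTendstoStrictly.re_nonpos_of_clusterPt hF hj0 hK hn₀)
    | zero => rfl
    | add => simp_all
    | smul => simp_all
  have heval : Continuous fun h : C₀(M, ℂ) => h n₀ := by
    exact (continuous_eval_const (F := M →ᵇ ℂ) n₀).comp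
      ZeroAtInftyContinuousMap.isometry_toBCF.continuous
  have hclosed : IsClosed {h : C₀(M, ℂ) | h n₀ = 0} := isClosed_eq heval continuous_const
  obtain ⟨k, hk⟩ := ZeroAtInftyContinuousMap.exists_eqOn_one (isCompact_singleton (x := n₀))
  exact one_ne_zero ((hk n₀ rfl).symm.trans (hclosed.closure_subset_iff.2 hvanish (hdense k)))

end Strict

section Orbit

variable {G : Type*} [Group G] [TopologicalSpace G] [IsTopologicalGroup G]
  [MeasurableSpace G] [BorelSpace G] {μ : Measure G} [IsFiniteMeasureOnCompacts μ]
  {M : Type*} [TopologicalSpace M] [MulAction G M] [ProperSMul G M]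
  {E : Type*} [NormedAddCommGroup E] {u : M → E}

lemma integrable_apply_inv_smul (hc : Continuous u) (hs : HasCompactSupport u) (m : M) :
    Integrable (fun x : G => u (x⁻¹ • m)) μ :=
  (by fun_prop : Continuous fun x : G => u (x⁻¹ • m)).integrable_of_hasCompactSupport
    (HasCompactSupport.of_support_subset_isCompact
      (ProperSMul.isCompact_setOfPred_inter_nonempty hs isCompact_singleton)
      fun _ hx => by_contra fun hx' =>
        hx (apply_inv_smul_eq_zero_of_notMem (Set.mem_singleton m) hx'))

variable [NormedSpace ℝ E] [LocallyCompactSpace M]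

lemma continuous_orbitIntegral (hc : Continuous u)
    (hs : HasCompactSupport u) : Continuous (orbitIntegral μ u) := by
  refine continuous_iff_continuousAt.2 fun m₀ => ?_
  obtain ⟨N, hN, hNm⟩ := exists_compact_mem_nhds m₀
  exact (continuousOn_integral_of_compact_support (f := fun m (x : G) => u (x⁻¹ • m))
    (ProperSMul.isCompact_setOfPred_inter_nonempty hs hN)
    (hc.comp (continuous_snd.inv.smul continuous_fst)).continuousOn
    fun m x hm hx => apply_inv_smul_eq_zero_of_notMem hm hx).continuousAt hNm

/-- By invariance, the orbit integral is bounded by its bound on the compact set `tsupport u`,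
which meets every orbit on which it does not vanish. -/
lemma exists_bound_orbitIntegral [μ.IsMulLeftInvariant]
    (hc : Continuous u) (hs : HasCompactSupport u) :
    ∃ B, 0 ≤ B ∧ ∀ m, ‖orbitIntegral μ u m‖ ≤ B := by
  obtain ⟨B, hB⟩ :=
    hs.isCompact.exists_bound_of_continuousOn (continuous_orbitIntegral (μ := μ) hc hs).continuousOn
  refine ⟨max B 0, le_max_right _ _, fun m => ?_⟩
  by_cases h : ∃ x : G, u (x⁻¹ • m) ≠ 0
  · obtain ⟨x, hx⟩ := h
    rw [← smul_inv_smul x m, orbitIntegral_smul]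
    exact (hB _ (subset_tsupport _ hx)).trans (le_max_left _ _)
  · push Not at h
    simp [orbitIntegral, h]

end Orbit

section Backward

variable {G : Type*} [Group G] [TopologicalSpace G] [IsTopologicalGroup G]
  [MeasurableSpace G] [BorelSpace G] {μ : Measure G} [IsFiniteMeasureOnCompacts μ]
  [μ.IsMulLeftInvariant] {M : Type*} [TopologicalSpace M] [LocallyCompactSpace M]
  [MulAction G M] [ProperSMul G M]

lemma isProperC0_of_hasCompactSupport {f : C₀(M, ℂ)} (hs : HasCompactSupport f) :
    IsProperC0 μ f := by
  obtain ⟨B, hB0, hB⟩ := exists_bound_orbitIntegral (μ := μ) (u := fun n => ‖f n‖)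
    (by fun_prop) hs.norm
  have hpB : ∀ lam m, ‖pLamC0 μ lam f m‖ ≤ B := fun lam m =>
    (norm_pLamC0_le_orbitIntegral (integrable_apply_inv_smul (by fun_prop) hs.norm m) lam).trans
      ((Real.le_norm_self _).trans (hB m))
  have hFB : ∀ m, ‖orbitIntegral μ f m‖ ≤ B := fun m =>
    (norm_integral_le_integral_norm _).trans ((Real.le_norm_self _).trans (hB m))
  refine ⟨.ofNormedAddCommGroup _ (continuous_orbitIntegral (map_continuous f) hs) B hFB,
    fun k ε hε => ?_⟩
  obtain ⟨A, hA, hkA⟩ := k.exists_isCompact_forall_norm_lt (ε := ε / (2 * B + 1)) (by positivity)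
  have hR := ProperSMul.isCompact_setOfPred_inter_nonempty (G := G) hs hA
  refine ⟨RieffelB.indicator _ hR.closure isClosed_closure, fun lam hlam m => ?_⟩
  rw [BoundedContinuousFunction.coe_ofNormedAddCommGroup, ← mul_sub, norm_mul]
  by_cases hm : m ∈ A
  · rw [pLamC0_eq_orbitIntegral hm fun x hx =>
      RieffelB.apply_eq_one_of_indicator_le hlam (subset_closure hx), sub_self, norm_zero,
      mul_zero]
    exact hε.le
  · calc ‖k m‖ * ‖pLamC0 μ lam f m - orbitIntegral μ f m‖
        ≤ ε / (2 * B + 1) * (2 * B + 1) := by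
          refine mul_le_mul (hkA m hm).le ?_ (norm_nonneg _) (by positivity)
          linarith [norm_sub_le (pLamC0 μ lam f m) (orbitIntegral μ f m), hpB lam m, hFB m]
      _ = ε := div_mul_cancel₀ _ (by positivity)

end Backward

lemma ZeroAtInftyContinuousMap.mem_span_nonneg_of_hasCompactSupport {M : Type*}
    [TopologicalSpace M] {g : C₀(M, ℂ)} (hg : HasCompactSupport g) :
    g ∈ Submodule.span ℂ {h : C₀(M, ℂ) | (∀ m, 0 ≤ h m) ∧ HasCompactSupport h} := by
  have piece : ∀ u : M → ℝ, Continuous u → HasCompactSupport u →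
      ∃ p ∈ Submodule.span ℂ {h : C₀(M, ℂ) | (∀ m, 0 ≤ h m) ∧ HasCompactSupport h},
        ∀ m, p m = (max (u m) 0 : ℝ) := fun u hu hs =>
    have hs' := (hs.comp_left (g := fun t : ℝ => max t 0) (max_self 0)).comp_left
      Complex.ofReal_zero
    ⟨ofHasCompactSupport (fun m => ((max (u m) 0 : ℝ) : ℂ)) (by fun_prop) hs',
      Submodule.subset_span ⟨fun _ => Complex.zero_le_real.2 (le_max_right _ _), hs'⟩,
      fun _ => rfl⟩
  have hre : HasCompactSupport fun m => (g m).re := hg.comp_left Complex.zero_re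
  have him : HasCompactSupport fun m => (g m).im := hg.comp_left Complex.zero_im
  obtain ⟨p₁, hp₁, e₁⟩ := piece _ (by fun_prop) hre
  obtain ⟨p₂, hp₂, e₂⟩ := piece _ (by fun_prop) hre.neg
  obtain ⟨p₃, hp₃, e₃⟩ := piece _ (by fun_prop) him
  obtain ⟨p₄, hp₄, e₄⟩ := piece _ (by fun_prop) him.neg
  have hdecomp : g = p₁ - p₂ + Complex.I • (p₃ - p₄) := by
    ext m
    apply Complex.ext <;> simp [e₁, e₂, e₃, e₄, max_zero_sub_max_neg_zero_eq_self]
  rw [hdecomp]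
  exact add_mem (sub_mem hp₁ hp₂) (Submodule.smul_mem _ _ (sub_mem hp₃ hp₄))

lemma dense_span_of_properSMul {G : Type*} [Group G] [TopologicalSpace G] [IsTopologicalGroup G]
    [MeasurableSpace G] [BorelSpace G] (μ : Measure G) [IsFiniteMeasureOnCompacts μ]
    [μ.IsMulLeftInvariant] {M : Type*} [TopologicalSpace M] [LocallyCompactSpace M] [T2Space M]
    [MulAction G M] [ProperSMul G M] :
    Dense (↑(Submodule.span ℂ
      {h : C₀(M, ℂ) | (∀ m : M, 0 ≤ h m) ∧ IsProperC0 μ h}) : Set C₀(M, ℂ)) :=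
  by
  refine ZeroAtInftyContinuousMap.dense_setOf_hasCompactSupport.mono fun g hg => ?_
  refine Submodule.span_mono ?_ (ZeroAtInftyContinuousMap.mem_span_nonneg_of_hasCompactSupport hg)
  exact fun h hh => ⟨hh.1, isProperC0_of_hasCompactSupport hh.2⟩

/-- For a continuous action of `G` on a locally compact Hausdorff space `M`,
the span of the `α`-proper nonnegative elements of `C₀(M, ℂ)` is dense in `C₀(M, ℂ)` iff
the action of `G` on `M` is proper (preimages of compact sets under
`(x, m) ↦ (x • m, m)` are compact). -/
theorem stmt7
    {G : Type*} [Group G] [TopologicalSpace G] [IsTopologicalGroup G]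
    [LocallyCompactSpace G] [MeasurableSpace G] [BorelSpace G]
    (μ : Measure G) [μ.IsHaarMeasure]
    {M : Type*} [TopologicalSpace M] [LocallyCompactSpace M] [T2Space M]
    [MulAction G M] [ContinuousSMul G M] :
    Dense (↑(Submodule.span ℂ
        {h : C₀(M, ℂ) | (∀ m : M, 0 ≤ h m) ∧ IsProperC0 μ h}) : Set C₀(M, ℂ)) ↔
      (∀ K : Set (M × M), IsCompact K →
        IsCompact ((fun p : G × M => (p.1 • p.2, p.2)) ⁻¹' K)) := by
  refine ⟨fun hdense K hK => isCompact_preimage_of_dense_span hdense hK, fun hproper => ?_⟩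
  have : ProperSMul G M := ⟨(isProperMap_iff_isCompact_preimage
    (f := fun p : G × M => (p.1 • p.2, p.2))).2 ⟨by fun_prop, fun K hK => hproper K hK⟩⟩
  exact dense_span_of_properSMul μ
end

section
/- Let ξ ∈ H and let k ≥ 0 be a constant. The following are equivalent: (i) for every η ∈ H, the coefficient function c_{ξη} lies in L²(G) and ‖c_{ξη}‖₂ ≤ k‖η‖; (ii) for every g ∈ L¹(G) ∩ L²(G), ‖U_g ξ‖ ≤ k‖g‖₂, where U_g ξ := ∫ g(x) U_x ξ dx (Bochner integral in H). -/
/-!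
(i) ⇒ (ii): for `v = U_g ξ` one has `‖v‖² = ⟪v, v⟫ = ∫ g · conj c_{ξv}`, so Cauchy–Schwarz in
`L²` gives `‖v‖² ≤ ‖g‖₂ · k‖v‖`.

(ii) ⇒ (i): testing (ii) on `g = 1_K · c_{ξη}` for a compact `K` gives
`∫_K |c_{ξη}|² = ⟪η, U_g ξ⟫ ≤ k‖η‖ (∫_K |c_{ξη}|²)^{1/2}`. Compact sets are used because then
`g • U ξ` is the indicator of a function continuous on `K`, hence Bochner integrable without any
separability of `H` or σ-compactness of `G`. The bounds on compacts control the whole `L²` norm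
because `c_{ξη}` is continuous and Haar measure is inner regular on open sets: each superlevel set
`{|c_{ξη}| > 1/n}` is open of finite measure, hence a countable union of compacts up to a null set.
The compacts are taken closed, hence measurable, since `G` is not assumed Hausdorff.
-/

open MeasureTheory Set
open scoped InnerProductSpace ComplexConjugate ENNReal

section L2Duality

variable {X : Type*} [MeasurableSpace X] {μ : Measure X}
  {H : Type*} [NormedAddCommGroup H] [InnerProductSpace ℂ H] [CompleteSpace H]

lemma integral_mul_conj_eq_inner_toLp {f h : X → ℂ} (hf : MemLp f 2 μ) (hh : MemLp h 2 μ) :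
    ∫ x, f x * conj (h x) ∂μ = ⟪hh.toLp h, hf.toLp f⟫_ℂ := by
  rw [L2.inner_def]
  refine integral_congr_ae ?_
  filter_upwards [hf.coeFn_toLp, hh.coeFn_toLp] with x hfx hhx
  rw [hfx, hhx, RCLike.inner_apply, mul_comm]

lemma norm_integral_mul_conj_le {f h : X → ℂ} (hf : MemLp f 2 μ) (hh : MemLp h 2 μ) :
    ‖∫ x, f x * conj (h x) ∂μ‖ ≤ (eLpNorm f 2 μ).toReal * (eLpNorm h 2 μ).toReal := by
  rw [integral_mul_conj_eq_inner_toLp hf hh, mul_comm]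
  simpa only [Lp.norm_toLp] using norm_inner_le_norm (𝕜 := ℂ) (hh.toLp h) (hf.toLp f)

lemma integral_mul_conj_self_eq_eLpNorm_sq {f : X → ℂ} (hf : MemLp f 2 μ) :
    ∫ x, f x * conj (f x) ∂μ = ((eLpNorm f 2 μ).toReal ^ 2 : ℝ) := by
  rw [integral_mul_conj_eq_inner_toLp hf hf, inner_self_eq_norm_sq_to_K, Lp.norm_toLp]
  norm_cast

lemma inner_integral_smul_eq_integral_mul_conj {F : X → H} {g : X → ℂ}
    (hgF : Integrable (fun x => g x • F x) μ) (η : H) :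
    ⟪η, ∫ x, g x • F x ∂μ⟫_ℂ = ∫ x, g x * conj ⟪F x, η⟫_ℂ ∂μ := by
  rw [← integral_inner hgF]
  simp only [inner_smul_right, inner_conj_symm]

lemma norm_integral_smul_le_of_eLpNorm_inner_le {F : X → H} {k : ℝ} (hk : 0 ≤ k)
    (hF : ∀ η : H, MemLp (fun x => ⟪F x, η⟫_ℂ) 2 μ ∧
      eLpNorm (fun x => ⟪F x, η⟫_ℂ) 2 μ ≤ ENNReal.ofReal (k * ‖η‖))
    {g : X → ℂ} (hg : MemLp g 2 μ) :
    ‖∫ x, g x • F x ∂μ‖ ≤ k * (eLpNorm g 2 μ).toReal := by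
  by_cases hgF : Integrable (fun x => g x • F x) μ
  swap
  · rw [integral_undef hgF, norm_zero]; positivity
  set v := ∫ x, g x • F x ∂μ
  obtain ⟨hcv, hcv_le⟩ := hF v
  have hcv_le' : (eLpNorm (fun x => ⟪F x, v⟫_ℂ) 2 μ).toReal ≤ k * ‖v‖ :=
    ENNReal.toReal_le_of_le_ofReal (by positivity) hcv_le
  have hsq : ‖v‖ * ‖v‖ ≤ (k * (eLpNorm g 2 μ).toReal) * ‖v‖ := calc
    ‖v‖ * ‖v‖ = ‖⟪v, v⟫_ℂ‖ := by
      rw [inner_self_eq_norm_sq_to_K, norm_pow, RCLike.norm_ofReal, abs_norm, sq]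
    _ = ‖∫ x, g x * conj ⟪F x, v⟫_ℂ ∂μ‖ := by rw [inner_integral_smul_eq_integral_mul_conj hgF]
    _ ≤ (eLpNorm g 2 μ).toReal * (eLpNorm (fun x => ⟪F x, v⟫_ℂ) 2 μ).toReal :=
      norm_integral_mul_conj_le hg hcv
    _ ≤ (eLpNorm g 2 μ).toReal * (k * ‖v‖) := by gcongr
    _ = (k * (eLpNorm g 2 μ).toReal) * ‖v‖ := by ring
  rcases (norm_nonneg v).eq_or_lt with hv | hv
  · rw [← hv]; positivity
  · exact le_of_mul_le_mul_right hsq hv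

end L2Duality

section InnerRegular

variable {X : Type*} [TopologicalSpace X] [MeasurableSpace X] [OpensMeasurableSpace X]
  {μ : Measure X}

lemma setLIntegral_le_of_forall_isCompact_isClosed_subset
    (hμ : μ.InnerRegularWRT (fun K => IsCompact K ∧ IsClosed K) IsOpen)
    {U : Set X} (hU : IsOpen U) (hμU : μ U ≠ ∞) (f : X → ℝ≥0∞) {B : ℝ≥0∞}
    (hB : ∀ K ⊆ U, IsCompact K → IsClosed K → ∫⁻ x in K, f x ∂μ ≤ B) :
    ∫⁻ x in U, f x ∂μ ≤ B := by
  have happrox (n : ℕ) : ∃ K ⊆ U, (IsCompact K ∧ IsClosed K) ∧ μ U < μ K + (n : ℝ≥0∞)⁻¹ :=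
    hμ.exists_subset_lt_add ⟨isCompact_empty, isClosed_empty⟩ hU hμU
      (ENNReal.inv_ne_zero.2 (ENNReal.natCast_ne_top n))
  choose K hKU hK hμK using happrox
  have hKU' (n : ℕ) : accumulate K n ⊆ U := iUnion₂_subset fun m _ => hKU m
  have hK' (n : ℕ) : IsCompact (accumulate K n) ∧ IsClosed (accumulate K n) :=
    ⟨isCompact_accumulate (fun m => (hK m).1) n,
      (finite_le_nat n).isClosed_biUnion fun m _ => (hK m).2⟩
  have hnull : μ (U \ ⋃ n, accumulate K n) = 0 := by
    refine le_antisymm (ge_of_tendsto' ENNReal.tendsto_inv_nat_nhds_zero fun n => ?_) bot_le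
    calc μ (U \ ⋃ n, accumulate K n) ≤ μ (U \ K n) :=
          measure_mono (sdiff_subset_sdiff_right
            ((subset_accumulate (x := n)).trans (subset_iUnion _ n)))
      _ = μ U - μ (K n) :=
          measure_sdiff (hKU n) (hK n).2.measurableSet.nullMeasurableSet
            (measure_ne_top_of_subset (hKU n) hμU)
      _ ≤ (n : ℝ≥0∞)⁻¹ := tsub_le_iff_left.2 (hμK n).le
  have hU_ae : U =ᵐ[μ] ⋃ n, accumulate K n :=
    ae_eq_set.2 ⟨hnull, by rw [sdiff_eq_empty.2 (iUnion_subset hKU'), measure_empty]⟩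
  rw [setLIntegral_congr hU_ae, setLIntegral_iUnion_of_directed _ monotone_accumulate.directed_le]
  exact iSup_le fun n => hB _ (hKU' n) (hK' n).1 (hK' n).2

lemma lintegral_le_of_forall_isCompact_isClosed
    (hμ : μ.InnerRegularWRT (fun K => IsCompact K ∧ IsClosed K) IsOpen)
    {f : X → ℝ≥0∞} (hf : Continuous f) {B : ℝ≥0∞}
    (hB : ∀ K, IsCompact K → IsClosed K → ∫⁻ x in K, f x ∂μ ≤ B) :
    ∫⁻ x, f x ∂μ ≤ B := by
  rcases eq_or_ne B ∞ with rfl | hB_top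
  · exact le_top
  set A : ℕ → Set X := fun n => {x | (n : ℝ≥0∞)⁻¹ < f x}
  have hA_open (n : ℕ) : IsOpen (A n) := isOpen_lt continuous_const hf
  have hA_mono : Monotone A := fun m n hmn x (hx : (m : ℝ≥0∞)⁻¹ < f x) =>
    lt_of_le_of_lt (ENNReal.inv_le_inv.2 (Nat.cast_le.2 hmn)) hx
  have hA_supp : Function.support f ⊆ ⋃ n, A n := fun x hx =>
    mem_iUnion.2 (ENNReal.exists_inv_nat_lt hx)
  -- Markov's inequality on compact subsets bounds the measure of each superlevel set.
  have hA_fin (n : ℕ) : μ (A n) ≠ ∞ := by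
    have hinv : (n : ℝ≥0∞)⁻¹ ≠ 0 := ENNReal.inv_ne_zero.2 (ENNReal.natCast_ne_top n)
    refine ne_top_of_le_ne_top (ENNReal.div_lt_top hB_top hinv).ne ?_
    rw [hμ.measure_eq_iSup (hA_open n)]
    refine iSup₂_le fun K hKA => iSup_le fun hK => ?_
    rw [ENNReal.le_div_iff_mul_le (Or.inl hinv) (Or.inr hB_top), mul_comm, ← setLIntegral_const]
    exact (setLIntegral_mono' hK.2.measurableSet fun x hx => (hKA hx).le).trans
      (hB K hK.1 hK.2)
  rw [← setLIntegral_eq_of_support_subset hA_supp,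
    setLIntegral_iUnion_of_directed _ hA_mono.directed_le]
  exact iSup_le fun n => setLIntegral_le_of_forall_isCompact_isClosed_subset hμ (hA_open n)
    (hA_fin n) f fun K _ hK hKc => hB K hK hKc

lemma eLpNorm_le_of_forall_isCompact_isClosed
    (hμ : μ.InnerRegularWRT (fun K => IsCompact K ∧ IsClosed K) IsOpen)
    {E : Type*} [NormedAddCommGroup E] {f : X → E} (hf : Continuous f)
    {p : ℝ≥0∞} (hp0 : p ≠ 0) (hp : p ≠ ∞) {B : ℝ≥0∞}
    (hB : ∀ K, IsCompact K → IsClosed K → eLpNorm f p (μ.restrict K) ≤ B) :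
    eLpNorm f p μ ≤ B := by
  have hp_pos : 0 < p.toReal := ENNReal.toReal_pos hp0 hp
  have hf_pow : Continuous fun x => ‖f x‖ₑ ^ p.toReal :=
    ENNReal.continuous_rpow_const.comp hf.enorm
  simp only [eLpNorm_eq_lintegral_rpow_enorm_toReal hp0 hp, one_div,
    ENNReal.rpow_inv_le_iff hp_pos] at hB ⊢
  exact lintegral_le_of_forall_isCompact_isClosed hμ hf_pow hB

end InnerRegular

lemma innerRegularWRT_isCompact_isClosed_isOpen_of_isHaarMeasure
    {G : Type*} [Group G] [TopologicalSpace G] [IsTopologicalGroup G] [LocallyCompactSpace G]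
    [MeasurableSpace G] [BorelSpace G] (μ : Measure G) [μ.IsHaarMeasure] :
    μ.InnerRegularWRT (fun K => IsCompact K ∧ IsClosed K) IsOpen := by
  intro U hU r hr
  set c := Measure.haarScalarFactor μ Measure.haar
  have hreg : (c • Measure.haar : Measure G).InnerRegularWRT IsCompact IsOpen :=
    Measure.Regular.innerRegular
  rw [Measure.measure_isHaarMeasure_eq_smul_of_isOpen μ Measure.haar hU] at hr
  obtain ⟨K, hKU, hK, hrK⟩ := hreg hU r hr
  refine ⟨closure K, hK.closure_subset_of_isOpen hU hKU, ⟨hK.closure, isClosed_closure⟩, ?_⟩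
  rw [Measure.measure_isMulInvariant_eq_smul_of_isCompact_closure μ Measure.haar
    (by rw [closure_closure]; exact hK.closure)]
  exact hrK.trans_le (measure_mono subset_closure)

section Coefficients

variable {X : Type*} [TopologicalSpace X] [MeasurableSpace X] [OpensMeasurableSpace X]
  {μ : Measure X} [IsFiniteMeasureOnCompacts μ]
  {H : Type*} [NormedAddCommGroup H] [InnerProductSpace ℂ H] [CompleteSpace H]
  {F : X → H} {k : ℝ}

lemma eLpNorm_inner_restrict_le_of_norm_integral_smul_le (hF : Continuous F)
    (h : ∀ g : X → ℂ, Integrable g μ → MemLp g 2 μ →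
      ‖∫ x, g x • F x ∂μ‖ ≤ k * (eLpNorm g 2 μ).toReal)
    (η : H) {K : Set X} (hK : IsCompact K) (hK_closed : IsClosed K) :
    eLpNorm (fun x => ⟪F x, η⟫_ℂ) 2 (μ.restrict K) ≤ ENNReal.ofReal (k * ‖η‖) := by
  set c : X → ℂ := fun x => ⟪F x, η⟫_ℂ
  have hc : Continuous c := hF.inner continuous_const
  have hKm : MeasurableSet K := hK_closed.measurableSet
  have : IsFiniteMeasure (μ.restrict K) := isFiniteMeasure_restrict.2 hK.measure_ne_top
  obtain ⟨C, hC⟩ := hK.exists_bound_of_continuousOn hc.continuousOn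
  have hc2 : MemLp c 2 (μ.restrict K) :=
    MemLp.of_bound hc.aestronglyMeasurable C (ae_restrict_of_forall_mem hKm hC)
  set g : X → ℂ := K.indicator c
  have hg : Integrable g μ :=
    (hc.continuousOn.integrableOn_compact' hK hKm).integrable_indicator hKm
  have hg2 : MemLp g 2 μ := (memLp_indicator_iff_restrict hKm).2 hc2
  have hgF : Integrable (fun x => g x • F x) μ := by
    rw [← indicator_smul_left]
    exact ((hc.smul hF).continuousOn.integrableOn_compact' hK hKm).integrable_indicator hKm
  set a := (eLpNorm c 2 (μ.restrict K)).toReal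
  have hsq : a * a ≤ k * ‖η‖ * a := calc
    a * a = ‖∫ x in K, c x * conj (c x) ∂μ‖ := by
      rw [integral_mul_conj_self_eq_eLpNorm_sq hc2, Complex.norm_real,
        Real.norm_of_nonneg (by positivity), sq]
    _ = ‖⟪η, ∫ x, g x • F x ∂μ⟫_ℂ‖ := by
      rw [inner_integral_smul_eq_integral_mul_conj hgF, ← integral_indicator hKm]
      simp only [g, indicator_mul_left]
      rfl
    _ ≤ ‖η‖ * ‖∫ x, g x • F x ∂μ‖ := norm_inner_le_norm _ _
    _ ≤ ‖η‖ * (k * a) := by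
      gcongr
      simpa only [g, eLpNorm_indicator_eq_eLpNorm_restrict hKm] using h g hg hg2
    _ = k * ‖η‖ * a := by ring
  rw [← ENNReal.ofReal_toReal hc2.eLpNorm_ne_top, ENNReal.ofReal_le_ofReal_iff']
  rcases ENNReal.toReal_nonneg.eq_or_lt with ha | ha
  · exact Or.inr ha.symm.le
  · exact Or.inl (le_of_mul_le_mul_right hsq ha)

lemma memLp_inner_and_eLpNorm_le_of_norm_integral_smul_le
    (hμ : μ.InnerRegularWRT (fun K => IsCompact K ∧ IsClosed K) IsOpen) (hF : Continuous F)
    (h : ∀ g : X → ℂ, Integrable g μ → MemLp g 2 μ →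
      ‖∫ x, g x • F x ∂μ‖ ≤ k * (eLpNorm g 2 μ).toReal)
    (η : H) :
    MemLp (fun x => ⟪F x, η⟫_ℂ) 2 μ ∧
      eLpNorm (fun x => ⟪F x, η⟫_ℂ) 2 μ ≤ ENNReal.ofReal (k * ‖η‖) := by
  have hc : Continuous fun x => ⟪F x, η⟫_ℂ := hF.inner continuous_const
  have hle := eLpNorm_le_of_forall_isCompact_isClosed hμ hc two_ne_zero ENNReal.ofNat_ne_top
    fun K hK hK_closed => eLpNorm_inner_restrict_le_of_norm_integral_smul_le hF h η hK hK_closed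
  exact ⟨⟨hc.aestronglyMeasurable, hle.trans_lt ENNReal.ofReal_lt_top⟩, hle⟩

end Coefficients

/-- For a strongly continuous unitary representation `U` of `G` on `H`,
`ξ ∈ H` and `k ≥ 0`, the following are equivalent: (i) every coefficient function
`c_{ξη}(x) = ⟪U_x ξ, η⟫` lies in `L²(G)` with `‖c_{ξη}‖₂ ≤ k‖η‖`; (ii) for every
`g ∈ L¹(G) ∩ L²(G)`, `‖U_g ξ‖ ≤ k‖g‖₂` where `U_g ξ = ∫ g(x) U_x ξ dx`. -/
theorem stmt9
    {G : Type*} [Group G] [TopologicalSpace G] [IsTopologicalGroup G]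
    [LocallyCompactSpace G] [MeasurableSpace G] [BorelSpace G]
    (μ : Measure G) [μ.IsHaarMeasure]
    {H : Type*} [NormedAddCommGroup H] [InnerProductSpace ℂ H] [CompleteSpace H]
    (U : G →* (H ≃ₗᵢ[ℂ] H))
    (hU : ∀ ξ : H, Continuous fun x => U x ξ)
    (ξ : H) (k : ℝ) (hk : 0 ≤ k) :
    (∀ η : H,
        MemLp (fun x => ⟪U x ξ, η⟫_ℂ) 2 μ ∧
        eLpNorm (fun x => ⟪U x ξ, η⟫_ℂ) 2 μ ≤ ENNReal.ofReal (k * ‖η‖)) ↔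
    (∀ g : G → ℂ, Integrable g μ → MemLp g 2 μ →
        ‖∫ x, g x • (U x ξ) ∂μ‖ ≤ k * (eLpNorm g 2 μ).toReal) :=
  ⟨fun hi _ _ hg => norm_integral_smul_le_of_eLpNorm_inner_le hk hi hg,
    memLp_inner_and_eLpNorm_le_of_norm_integral_smul_le
      (innerRegularWRT_isCompact_isClosed_isOpen_of_isHaarMeasure μ) (hU ξ)⟩
end

section
/- Let U and V be strongly continuous unitary representations of G on complex Hilbert spaces H_U and H_V which are disjoint, in the sense that the only bounded linear operator T : H_V → H_U with T ∘ V_x = U_x ∘ T for all x ∈ G is T = 0. Let ξ ∈ H_U be U-bounded and η ∈ H_V be V-bounded. Then for all ω ∈ H_U and ζ ∈ H_V, the function x ↦ conj(⟪V_x η, ζ⟫)·⟪U_x ξ, ω⟫ is integrable on G and ∫ conj(⟪V_x η, ζ⟫)·⟪U_x ξ, ω⟫ dx = 0; that is, the coefficient functions c_{ξω} and c_{ηζ} are orthogonal in L²(G). -/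
/-!
The sesquilinear form `(ζ, ω) ↦ ∫ conj c_{ηζ} · c_{ξω}` is bounded, because `ξ` and `η` are
bounded vectors: it is the `L²` inner product of the images of `ζ` and `ω` under the bounded
coefficient maps `C_η : H_V → L²(G)` and `C_ξ : H_U → L²(G)`. So it is `⟪T ζ, ω⟫` for
`T = C_ξ† ∘ C_η : H_V → H_U`. Left invariance of Haar measure makes the form invariant under
`(ζ, ω) ↦ (V_y ζ, U_y ω)`, i.e. `T` intertwines `V` and `U`; by disjointness `T = 0`.
-/

open MeasureTheory ComplexConjugate
open scoped InnerProductSpace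

section CoefficientMap

variable {𝕜 : Type*} [RCLike 𝕜] {α : Type*} [MeasurableSpace α] {μ : Measure α}

theorem MeasureTheory.MemLp.integrable_conj_mul {f g : α → 𝕜} (hf : MemLp f 2 μ)
    (hg : MemLp g 2 μ) : Integrable (fun x => conj (f x) * g x) μ :=
  hf.star.integrable_mul hg

theorem MeasureTheory.MemLp.inner_toLp_toLp {f g : α → 𝕜} (hf : MemLp f 2 μ)
    (hg : MemLp g 2 μ) : ⟪hf.toLp f, hg.toLp g⟫_𝕜 = ∫ x, conj (f x) * g x ∂μ := by
  rw [L2.inner_def]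
  refine integral_congr_ae ?_
  filter_upwards [hf.coeFn_toLp, hg.coeFn_toLp] with x hfx hgx
  rw [hfx, hgx, RCLike.inner_apply, mul_comm]

variable {E : Type*} [NormedAddCommGroup E] [InnerProductSpace 𝕜 E]

variable (𝕜 μ) in
/-- For `v x = U x ξ` this says that `ξ` is a `U`-bounded vector. -/
def IsCoeffBounded (v : α → E) (k : ℝ) : Prop :=
  ∀ w : E, MemLp (fun x => ⟪v x, w⟫_𝕜) 2 μ ∧
    eLpNorm (fun x => ⟪v x, w⟫_𝕜) 2 μ ≤ ENNReal.ofReal (k * ‖w‖)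

noncomputable def coeffL2 (v : α → E) (k : ℝ) (hv : IsCoeffBounded 𝕜 μ v k) :
    E →L[𝕜] Lp 𝕜 2 μ :=
  LinearMap.mkContinuous
    { toFun := fun w => (hv w).1.toLp _
      map_add' := fun w w' => by
        simp_rw [inner_add_right]
        exact MemLp.toLp_add (hv w).1 (hv w').1
      map_smul' := fun c w => by
        simp_rw [inner_smul_right]
        exact MemLp.toLp_const_smul c (hv w).1 }
    |k| fun w => by
      refine (Lp.norm_toLp _ (hv w).1).trans_le (ENNReal.toReal_le_of_le_ofReal (by positivity) ?_)
      exact (hv w).2.trans (ENNReal.ofReal_le_ofReal (by gcongr; exact le_abs_self k))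

theorem inner_coeffL2_coeffL2 {F : Type*} [NormedAddCommGroup F] [InnerProductSpace 𝕜 F]
    (v : α → E) (k : ℝ) (hv : IsCoeffBounded 𝕜 μ v k) (u : α → F) (l : ℝ)
    (hu : IsCoeffBounded 𝕜 μ u l) (z : F) (w : E) :
    ⟪coeffL2 u l hu z, coeffL2 v k hv w⟫_𝕜 = ∫ x, conj ⟪u x, z⟫_𝕜 * ⟪v x, w⟫_𝕜 ∂μ :=
  MemLp.inner_toLp_toLp (hu z).1 (hv w).1

end CoefficientMap

theorem inner_apply_apply_eq_inner_inv_mul {G 𝕜 E : Type*} [Group G]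
    [RCLike 𝕜] [NormedAddCommGroup E] [InnerProductSpace 𝕜 E] (U : G →* (E ≃ₗᵢ[𝕜] E))
    (x y : G) (a b : E) : ⟪U x a, U y b⟫_𝕜 = ⟪U (y⁻¹ * x) a, b⟫_𝕜 := by
  conv_lhs => rw [← mul_inv_cancel_left y x, map_mul]
  exact (U y).inner_map_map _ _

theorem ContinuousLinearMap.apply_map_eq_map_apply_of_inner {𝕜 E F : Type*} [RCLike 𝕜]
    [NormedAddCommGroup E] [InnerProductSpace 𝕜 E] [NormedAddCommGroup F] [InnerProductSpace 𝕜 F]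
    (T : F →L[𝕜] E) (f : E ≃ₗᵢ[𝕜] E) (g : F ≃ₗᵢ[𝕜] F)
    (hT : ∀ a b, ⟪T (g a), f b⟫_𝕜 = ⟪T a, b⟫_𝕜) (a : F) : T (g a) = f (T a) := by
  rw [← f.symm_apply_eq]
  refine ext_inner_right 𝕜 fun b => ?_
  rw [LinearIsometryEquiv.inner_map_eq_flip, f.symm_symm, hT]

theorem stmt16_general
    {G : Type*} [Group G] [TopologicalSpace G] [IsTopologicalGroup G]
    [MeasurableSpace G] [BorelSpace G]
    (μ : Measure G) [μ.IsHaarMeasure]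
    {HU : Type*} [NormedAddCommGroup HU] [InnerProductSpace ℂ HU] [CompleteSpace HU]
    {HV : Type*} [NormedAddCommGroup HV] [InnerProductSpace ℂ HV]
    (U : G →* (HU ≃ₗᵢ[ℂ] HU))
    (V : G →* (HV ≃ₗᵢ[ℂ] HV))
    (hdisj : ∀ T : HV →L[ℂ] HU, (∀ (x : G) (v : HV), T (V x v) = U x (T v)) → T = 0)
    (ξ : HU) (kξ : ℝ)
    (hξ : ∀ η : HU,
      MemLp (fun x => ⟪U x ξ, η⟫_ℂ) 2 μ ∧
      eLpNorm (fun x => ⟪U x ξ, η⟫_ℂ) 2 μ ≤ ENNReal.ofReal (kξ * ‖η‖))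
    (η : HV) (kη : ℝ)
    (hη : ∀ ζ : HV,
      MemLp (fun x => ⟪V x η, ζ⟫_ℂ) 2 μ ∧
      eLpNorm (fun x => ⟪V x η, ζ⟫_ℂ) 2 μ ≤ ENNReal.ofReal (kη * ‖ζ‖)) :
    ∀ (ω : HU) (ζ : HV),
      Integrable (fun x => (starRingEnd ℂ) ⟪V x η, ζ⟫_ℂ * ⟪U x ξ, ω⟫_ℂ) μ ∧
      ∫ x, (starRingEnd ℂ) ⟪V x η, ζ⟫_ℂ * ⟪U x ξ, ω⟫_ℂ ∂μ = 0 := by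
  change IsCoeffBounded ℂ μ (fun x => U x ξ) kξ at hξ
  change IsCoeffBounded ℂ μ (fun x => V x η) kη at hη
  set T : HV →L[ℂ] HU := (coeffL2 _ kξ hξ).adjoint ∘L coeffL2 _ kη hη
  have hT : ∀ ζ ω, ⟪T ζ, ω⟫_ℂ = ∫ x, conj ⟪V x η, ζ⟫_ℂ * ⟪U x ξ, ω⟫_ℂ ∂μ := fun ζ ω => by
    rw [ContinuousLinearMap.comp_apply, ContinuousLinearMap.adjoint_inner_left,
      inner_coeffL2_coeffL2]
  have hT_intertwines : ∀ y ζ, T (V y ζ) = U y (T ζ) := fun y =>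
    T.apply_map_eq_map_apply_of_inner (U y) (V y) fun ζ ω => by
      simp_rw [hT, inner_apply_apply_eq_inner_inv_mul]
      exact integral_mul_left_eq_self (fun x => conj ⟪V x η, ζ⟫_ℂ * ⟪U x ξ, ω⟫_ℂ) y⁻¹
  intro ω ζ
  refine ⟨(hη ζ).1.integrable_conj_mul (hξ ω).1, ?_⟩
  rw [← hT, hdisj T hT_intertwines]
  simp

/-- **first orthogonality relation.** If `U` and `V` are disjoint strongly
continuous unitary representations of `G`, `ξ` is `U`-bounded and `η` is `V`-bounded, then
for all `ω, ζ` the coefficient functions `c_{ξω}` and `c_{ηζ}` are orthogonal in `L²(G)`: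
`x ↦ conj ⟪V_x η, ζ⟫ · ⟪U_x ξ, ω⟫` is integrable with integral `0`. -/
theorem stmt16
    {G : Type*} [Group G] [TopologicalSpace G] [IsTopologicalGroup G]
    [LocallyCompactSpace G] [MeasurableSpace G] [BorelSpace G]
    (μ : Measure G) [μ.IsHaarMeasure]
    {HU : Type*} [NormedAddCommGroup HU] [InnerProductSpace ℂ HU] [CompleteSpace HU]
    {HV : Type*} [NormedAddCommGroup HV] [InnerProductSpace ℂ HV] [CompleteSpace HV]
    (U : G →* (HU ≃ₗᵢ[ℂ] HU)) (hU : ∀ ξ : HU, Continuous fun x => U x ξ)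
    (V : G →* (HV ≃ₗᵢ[ℂ] HV)) (hV : ∀ ξ : HV, Continuous fun x => V x ξ)
    (hdisj : ∀ T : HV →L[ℂ] HU, (∀ (x : G) (v : HV), T (V x v) = U x (T v)) → T = 0)
    (ξ : HU) (kξ : ℝ)
    (hξ : ∀ η : HU,
      MemLp (fun x => ⟪U x ξ, η⟫_ℂ) 2 μ ∧
      eLpNorm (fun x => ⟪U x ξ, η⟫_ℂ) 2 μ ≤ ENNReal.ofReal (kξ * ‖η‖))
    (η : HV) (kη : ℝ)
    (hη : ∀ ζ : HV,
      MemLp (fun x => ⟪V x η, ζ⟫_ℂ) 2 μ ∧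
      eLpNorm (fun x => ⟪V x η, ζ⟫_ℂ) 2 μ ≤ ENNReal.ofReal (kη * ‖ζ‖)) :
    ∀ (ω : HU) (ζ : HV),
      Integrable (fun x => (starRingEnd ℂ) ⟪V x η, ζ⟫_ℂ * ⟪U x ξ, ω⟫_ℂ) μ ∧
      ∫ x, (starRingEnd ℂ) ⟪V x η, ζ⟫_ℂ * ⟪U x ξ, ω⟫_ℂ ∂μ = 0 :=
  stmt16_general μ U V hdisj ξ kξ hξ η kη hη
end

section
/- Let ξ and η be U-bounded vectors with constants k_ξ and k_η respectively. Then for every φ ∈ L²(G): (i) for every x ∈ G the function y ↦ φ(y)·c_{ξη}(y⁻¹x) is integrable on G, and the convolution (φ ⋆ c_{ξη})(x) := ∫ φ(y) c_{ξη}(y⁻¹x) dy satisfies |（φ ⋆ c_{ξη})(x)| ≤ ‖φ‖₂·‖c_{ηξ}‖₂ for all x; (ii) φ ⋆ c_{ξη} is continuous on G and vanishes at infinity; (iii) φ ⋆ c_{ξη} lies in L²(G) with ‖φ ⋆ c_{ξη}‖₂ ≤ k_ξ k_η ‖φ‖₂. -/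
/-!
Since `c_{ξη}(y⁻¹x) = ⟪U_x ξ, U_y η⟫`, the integrand of `(φ ⋆ c_{ξη})(x)` is `φ` times the
conjugate of `c_{η, U_x ξ}`, so (i) is Cauchy–Schwarz together with the left invariance of Haar
measure. Because `η` is `U`-bounded, `ζ ↦ ∫ conj φ(y) c_{ηζ}(y) dy` is a bounded functional of
norm at most `k_η ‖φ‖₂`; its Riesz vector `v` satisfies `φ ⋆ c_{ξη} = c_{ξv}`. So the convolution
is a coefficient of `ξ`: it is continuous, lies in `L²` with norm at most `k_ξ ‖v‖`, and it is
right uniformly continuous. A right uniformly continuous `Lᵖ` function `F` vanishes at infinity: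
for a fixed neighbourhood `O` of `1`, every translate `xO` with `|F(x)| > ε` lies in
`{|F| ≥ ε/2}`, a set of finite Haar measure, so `{|F| > ε}` cannot contain arbitrarily many
points with pairwise disjoint translates `xO`, as it would if it escaped every compact set.
-/

open MeasureTheory Filter Topology
open scoped InnerProductSpace ENNReal NNReal Pointwise ComplexConjugate

lemma norm_integral_mul_le_eLpNorm_mul_eLpNorm {α 𝕜 : Type*} [MeasurableSpace α] {μ : Measure α}
    [NormedRing 𝕜] [NormedSpace ℝ 𝕜] {f g : α → 𝕜} (hf : MemLp f 2 μ) (hg : MemLp g 2 μ) :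
    ‖∫ x, f x * g x ∂μ‖ ≤ (eLpNorm f 2 μ).toReal * (eLpNorm g 2 μ).toReal := by
  rw [← ENNReal.toReal_mul, ← toReal_enorm]
  refine ENNReal.toReal_mono (ENNReal.mul_ne_top hf.eLpNorm_ne_top hg.eLpNorm_ne_top)
    (le_trans ?_ (eLpNorm_smul_le_mul_eLpNorm (r := 1) hg.1 hf.1))
  simpa [eLpNorm_one_eq_lintegral_enorm] using enorm_integral_le_lintegral_enorm _

lemma ENNReal.ofReal_mul_le_ofReal_mul (a : ℝ) {r s : ℝ} (hr : 0 ≤ r)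
    (h : ENNReal.ofReal r ≤ ENNReal.ofReal s) :
    ENNReal.ofReal (a * r) ≤ ENNReal.ofReal (a * s) := by
  rcases le_or_gt a 0 with ha | ha
  · simp [ENNReal.ofReal_of_nonpos (mul_nonpos_of_nonpos_of_nonneg ha hr)]
  · rw [ENNReal.ofReal_mul ha.le, ENNReal.ofReal_mul ha.le]
    gcongr

section Packing

variable {G : Type*} [Group G]

lemma disjoint_smul_set_of_notMem_smul_mul_inv {O : Set G} {x z : G}
    (hx : x ∉ z • (O * O⁻¹)) : Disjoint (x • O) (z • O) := by
  rw [Set.disjoint_left]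
  rintro _ ⟨a, ha, rfl⟩ ⟨b, hb, hab⟩
  refine hx ⟨b * a⁻¹, Set.mul_mem_mul hb (Set.inv_mem_inv.2 ha), ?_⟩
  simp only [smul_eq_mul] at hab ⊢
  rw [← mul_assoc, hab, mul_inv_cancel_right]

variable [TopologicalSpace G] [IsTopologicalGroup G]

lemma exists_finset_pairwiseDisjoint_smul {S O C : Set G} (hC : IsCompact C) (hOC : O ⊆ C)
    (hS : ∀ K, IsCompact K → ¬ S ⊆ K) (n : ℕ) :
    ∃ s : Finset G, s.card = n ∧ ↑s ⊆ S ∧ (s : Set G).PairwiseDisjoint (· • O) := by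
  classical
  induction n with
  | zero => exact ⟨∅, rfl, by simp, by simp⟩
  | succ n ih =>
    obtain ⟨s, hcard, hsS, hdisj⟩ := ih
    -- `s` itself is included so that the new point is new even when `O` is empty.
    have hK : IsCompact ((s : Set G) ∪ ⋃ z ∈ s, z • (C * C⁻¹)) :=
      s.finite_toSet.isCompact.union (s.isCompact_biUnion fun z _ => (hC.mul hC.inv).smul z)
    obtain ⟨x, hxS, hxK⟩ := Set.not_subset.1 (hS _ hK)
    simp only [Set.mem_union, Finset.mem_coe, Set.mem_iUnion, not_or, not_exists] at hxK
    refine ⟨insert x s, by rw [Finset.card_insert_of_notMem hxK.1, hcard], ?_, ?_⟩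
    · simpa [Set.insert_subset_iff] using ⟨hxS, hsS⟩
    · rw [Finset.coe_insert]
      refine hdisj.insert fun z hz _ => disjoint_smul_set_of_notMem_smul_mul_inv fun hxz => ?_
      exact hxK.2 z hz (Set.smul_set_mono (Set.mul_subset_mul hOC (Set.inv_subset_inv.2 hOC)) hxz)

variable [MeasurableSpace G] [MeasurableMul G] (μ : Measure G) [μ.IsMulLeftInvariant]

lemma exists_isCompact_superset_of_smul_subset {S O C T : Set G} (hOm : MeasurableSet O)
    (hO : μ O ≠ 0) (hC : IsCompact C) (hOC : O ⊆ C) (hT : μ T ≠ ∞)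
    (hST : ∀ x ∈ S, x • O ⊆ T) : ∃ K, IsCompact K ∧ S ⊆ K := by
  by_contra! hS
  obtain ⟨n, hn⟩ := ENNReal.exists_nat_mul_gt hO hT
  obtain ⟨s, hcard, hsS, hdisj⟩ := exists_finset_pairwiseDisjoint_smul hC hOC hS n
  refine hn.not_ge ?_
  calc (n : ℝ≥0∞) * μ O = ∑ z ∈ s, μ (z • O) := by simp [measure_smul, hcard]
    _ = μ (⋃ z ∈ s, z • O) := (measure_biUnion_finset hdisj fun z _ => hOm.const_smul z).symm
    _ ≤ μ T := measure_mono (Set.iUnion₂_subset fun z hz => hST z (hsS hz))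

end Packing

theorem MemLp.exists_isCompact_norm_le {G E : Type*} [Group G] [TopologicalSpace G]
    [IsTopologicalGroup G] [LocallyCompactSpace G] [MeasurableSpace G] [BorelSpace G]
    (μ : Measure G) [μ.IsHaarMeasure] [NormedAddCommGroup E] {F : G → E} {p : ℝ≥0∞}
    (hp0 : p ≠ 0) (hptop : p ≠ ∞)
    (hF : MemLp F p μ) (hunif : ∀ ε > 0, ∃ V ∈ 𝓝 (1 : G), ∀ x, ∀ g ∈ V, ‖F (x * g) - F x‖ ≤ ε)
    {ε : ℝ} (hε : 0 < ε) : ∃ K, IsCompact K ∧ ∀ x ∉ K, ‖F x‖ ≤ ε := by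
  obtain ⟨V, hV, hVF⟩ := hunif (ε / 2) (half_pos hε)
  obtain ⟨C, hC, hC1⟩ := exists_compact_mem_nhds (1 : G)
  have hO1 : (1 : G) ∈ interior (V ∩ C) := mem_interior_iff_mem_nhds.2 (inter_mem hV hC1)
  have hT : μ {x | (ε / 2).toNNReal ≤ ‖F x‖₊} < ∞ :=
    hF.meas_ge_lt_top hp0 hptop (by simpa using hε)
  have hST : ∀ x ∈ {x | ε < ‖F x‖}, x • interior (V ∩ C) ⊆ {x | (ε / 2).toNNReal ≤ ‖F x‖₊} := by
    rintro x (hx : ε < ‖F x‖) _ ⟨g, hg, rfl⟩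
    change (ε / 2).toNNReal ≤ ‖F (x * g)‖₊
    rw [Real.toNNReal_le_iff_le_coe, coe_nnnorm]
    linarith [norm_le_norm_add_norm_sub (F (x * g)) (F x), hVF x g (interior_subset hg).1]
  obtain ⟨K, hK, hSK⟩ := exists_isCompact_superset_of_smul_subset μ isOpen_interior.measurableSet
    (isOpen_interior.measure_ne_zero μ ⟨1, hO1⟩) hC
    (interior_subset.trans Set.inter_subset_right) hT.ne hST
  exact ⟨K, hK, fun x hx => not_lt.1 fun h => hx (hSK h)⟩

theorem exists_weak_integral_of_memLp_two {α E : Type*} [MeasurableSpace α] {μ : Measure α}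
    [NormedAddCommGroup E] [InnerProductSpace ℂ E] [CompleteSpace E] {w : α → E} {k : ℝ}
    (hw : ∀ ζ : E, MemLp (fun y => ⟪w y, ζ⟫_ℂ) 2 μ ∧
      eLpNorm (fun y => ⟪w y, ζ⟫_ℂ) 2 μ ≤ ENNReal.ofReal (k * ‖ζ‖))
    {f : α → ℂ} (hf : MemLp f 2 μ) :
    ∃ v : E, ENNReal.ofReal ‖v‖ ≤ ENNReal.ofReal (k * (eLpNorm f 2 μ).toReal) ∧
      ∀ ζ : E, ⟪ζ, v⟫_ℂ = ∫ y, f y * ⟪ζ, w y⟫_ℂ ∂μ := by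
  set t := (eLpNorm f 2 μ).toReal
  have hint (ζ : E) : Integrable (fun y => conj (f y) * ⟪w y, ζ⟫_ℂ) μ :=
    hf.star.integrable_mul (hw ζ).1
  let ℓ : E →ₗ[ℂ] ℂ :=
    { toFun := fun ζ => ∫ y, conj (f y) * ⟪w y, ζ⟫_ℂ ∂μ
      map_add' := fun a b => by
        simp only [inner_add_right, mul_add]
        exact integral_add (hint a) (hint b)
      map_smul' := fun c a => by
        simp only [inner_smul_right, RingHom.id_apply, smul_eq_mul, mul_left_comm _ c]
        exact integral_const_mul c _ }
  have hℓ (ζ : E) : ‖ℓ ζ‖ ≤ k.toNNReal * t * ‖ζ‖ := by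
    have hwζ : (eLpNorm (fun y => ⟪w y, ζ⟫_ℂ) 2 μ).toReal ≤ k.toNNReal * ‖ζ‖ :=
      ENNReal.toReal_le_of_le_ofReal (by positivity) ((hw ζ).2.trans
        (ENNReal.ofReal_le_ofReal (by gcongr; exact Real.le_coe_toNNReal k)))
    calc ‖ℓ ζ‖ ≤ t * (eLpNorm (fun y => ⟪w y, ζ⟫_ℂ) 2 μ).toReal := by
          simpa [t, ℓ] using norm_integral_mul_le_eLpNorm_mul_eLpNorm hf.star (hw ζ).1
      _ ≤ t * (k.toNNReal * ‖ζ‖) := by gcongr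
      _ = k.toNNReal * t * ‖ζ‖ := by ring
  let v := (InnerProductSpace.toDual ℂ E).symm (ℓ.mkContinuous _ hℓ)
  refine ⟨v, ?_, fun ζ => ?_⟩
  · have hv : ‖v‖ ≤ k.toNNReal * t := by
      rw [LinearIsometryEquiv.norm_map]
      exact LinearMap.mkContinuous_norm_le _ (by positivity) hℓ
    calc ENNReal.ofReal ‖v‖ ≤ ENNReal.ofReal (k.toNNReal * t) := ENNReal.ofReal_le_ofReal hv
      _ = ENNReal.ofReal (k * t) := by
        rw [ENNReal.ofReal_mul' ENNReal.toReal_nonneg, ENNReal.ofReal_mul' ENNReal.toReal_nonneg,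
          ENNReal.ofReal_coe_nnreal]
        rfl
  · rw [← inner_conj_symm, InnerProductSpace.toDual_symm_apply, LinearMap.mkContinuous_apply]
    change conj (∫ y, conj (f y) * ⟪w y, ζ⟫_ℂ ∂μ) = _
    simp [← integral_conj, inner_conj_symm]

section UnitaryRepresentation

variable {G H : Type*} [Group G] [NormedAddCommGroup H] [InnerProductSpace ℂ H]
  (U : G →* (H ≃ₗᵢ[ℂ] H))

lemma inner_apply_inv_mul (x y : G) (ξ η : H) :
    ⟪U (y⁻¹ * x) ξ, η⟫_ℂ = ⟪U x ξ, U y η⟫_ℂ := by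
  rw [← (U y).inner_map_map, ← Function.comp_apply (f := U y), ← LinearIsometryEquiv.coe_mul,
    ← map_mul, mul_inv_cancel_left]

lemma norm_inner_apply_mul_sub_le (x g : G) (ξ v : H) :
    ‖⟪U (x * g) ξ, v⟫_ℂ - ⟪U x ξ, v⟫_ℂ‖ ≤ ‖U g ξ - ξ‖ * ‖v‖ := by
  rw [← inner_sub_left, map_mul, LinearIsometryEquiv.coe_mul, Function.comp_apply, ← map_sub]
  exact (norm_inner_le_norm _ _).trans_eq (by rw [(U x).norm_map])

lemma exists_mem_nhds_one_norm_inner_apply_mul_sub_le [TopologicalSpace G] {ξ : H}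
    (hξ : Continuous fun g => U g ξ) (v : H) {ε : ℝ} (hε : 0 < ε) :
    ∃ V ∈ 𝓝 (1 : G), ∀ x, ∀ g ∈ V, ‖⟪U (x * g) ξ, v⟫_ℂ - ⟪U x ξ, v⟫_ℂ‖ ≤ ε := by
  have hcont : Continuous fun g => ‖U g ξ - ξ‖ * ‖v‖ :=
    ((hξ.sub continuous_const).norm).mul continuous_const
  refine ⟨_, hcont.continuousAt.eventually_lt continuousAt_const (by simpa using hε),
    fun x g hg => (norm_inner_apply_mul_sub_le U x g ξ v).trans hg.le⟩

lemma eLpNorm_inner_apply_map_right [MeasurableSpace G] [MeasurableMul G]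
    (μ : Measure G) [μ.IsMulLeftInvariant] {ξ η : H}
    (h : AEStronglyMeasurable (fun y => ⟪U y η, ξ⟫_ℂ) μ) (p : ℝ≥0∞) (x : G) :
    eLpNorm (fun y => ⟪U y η, U x ξ⟫_ℂ) p μ = eLpNorm (fun y => ⟪U y η, ξ⟫_ℂ) p μ := by
  have hcomp : (fun y => ⟪U y η, U x ξ⟫_ℂ) = (fun y => ⟪U y η, ξ⟫_ℂ) ∘ (x⁻¹ * ·) :=
    funext fun y => (inner_apply_inv_mul U y x η ξ).symm
  rw [hcomp]
  exact eLpNorm_comp_measurePreserving h (measurePreserving_mul_left μ x⁻¹)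

end UnitaryRepresentation

/-- Let `ξ, η` be `U`-bounded vectors with constants `k_ξ, k_η`, and let
`φ ∈ L²(G)`. Then (i) for every `x` the function `y ↦ φ(y) c_{ξη}(y⁻¹x)` is integrable and
`|(φ ⋆ c_{ξη})(x)| ≤ ‖φ‖₂ ‖c_{ηξ}‖₂`; (ii) `φ ⋆ c_{ξη}` is continuous and vanishes at
infinity; (iii) `φ ⋆ c_{ξη} ∈ L²(G)` with `‖φ ⋆ c_{ξη}‖₂ ≤ k_ξ k_η ‖φ‖₂`. -/
theorem stmt17
    {G : Type*} [Group G] [TopologicalSpace G] [IsTopologicalGroup G]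
    [LocallyCompactSpace G] [MeasurableSpace G] [BorelSpace G]
    (μ : Measure G) [μ.IsHaarMeasure]
    {H : Type*} [NormedAddCommGroup H] [InnerProductSpace ℂ H] [CompleteSpace H]
    (U : G →* (H ≃ₗᵢ[ℂ] H)) (hU : ∀ ξ : H, Continuous fun x => U x ξ)
    (ξ : H) (kξ : ℝ)
    (hξ : ∀ η : H,
      MemLp (fun x => ⟪U x ξ, η⟫_ℂ) 2 μ ∧
      eLpNorm (fun x => ⟪U x ξ, η⟫_ℂ) 2 μ ≤ ENNReal.ofReal (kξ * ‖η‖))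
    (η : H) (kη : ℝ)
    (hη : ∀ ζ : H,
      MemLp (fun x => ⟪U x η, ζ⟫_ℂ) 2 μ ∧
      eLpNorm (fun x => ⟪U x η, ζ⟫_ℂ) 2 μ ≤ ENNReal.ofReal (kη * ‖ζ‖))
    (φ : G → ℂ) (hφ : MemLp φ 2 μ) :
    ((∀ x : G, Integrable (fun y => φ y * ⟪U (y⁻¹ * x) ξ, η⟫_ℂ) μ) ∧
      ∀ x : G, ‖∫ y, φ y * ⟪U (y⁻¹ * x) ξ, η⟫_ℂ ∂μ‖ ≤
        (eLpNorm φ 2 μ).toReal * (eLpNorm (fun x => ⟪U x η, ξ⟫_ℂ) 2 μ).toReal) ∧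
    (Continuous (fun x : G => ∫ y, φ y * ⟪U (y⁻¹ * x) ξ, η⟫_ℂ ∂μ) ∧
      ∀ ε > (0 : ℝ), ∃ K : Set G, IsCompact K ∧
        ∀ x ∉ K, ‖∫ y, φ y * ⟪U (y⁻¹ * x) ξ, η⟫_ℂ ∂μ‖ ≤ ε) ∧
    (MemLp (fun x : G => ∫ y, φ y * ⟪U (y⁻¹ * x) ξ, η⟫_ℂ ∂μ) 2 μ ∧
      eLpNorm (fun x : G => ∫ y, φ y * ⟪U (y⁻¹ * x) ξ, η⟫_ℂ ∂μ) 2 μ ≤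
        ENNReal.ofReal (kξ * kη * (eLpNorm φ 2 μ).toReal)) := by
  have hintegrand (x y : G) : φ y * ⟪U (y⁻¹ * x) ξ, η⟫_ℂ = φ y * conj ⟪U y η, U x ξ⟫_ℂ := by
    rw [inner_apply_inv_mul, inner_conj_symm]
  obtain ⟨v, hv, hvφ⟩ := exists_weak_integral_of_memLp_two hη hφ
  have hcoeff (x : G) : ∫ y, φ y * ⟪U (y⁻¹ * x) ξ, η⟫_ℂ ∂μ = ⟪U x ξ, v⟫_ℂ := by
    simp_rw [inner_apply_inv_mul, hvφ]
  refine ⟨⟨fun x => ?_, fun x => ?_⟩, ?_, ?_⟩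
  · simp_rw [hintegrand]
    exact hφ.integrable_mul (hη (U x ξ)).1.star
  · simp_rw [hintegrand]
    refine (norm_integral_mul_le_eLpNorm_mul_eLpNorm hφ (hη (U x ξ)).1.star).trans_eq ?_
    rw [eLpNorm_star, eLpNorm_inner_apply_map_right U μ (hη ξ).1.1]
  · simp only [hcoeff]
    exact ⟨(hU ξ).inner continuous_const, fun ε hε => MemLp.exists_isCompact_norm_le μ
      two_ne_zero ENNReal.ofNat_ne_top (hξ v).1
      (fun δ hδ => exists_mem_nhds_one_norm_inner_apply_mul_sub_le U (hU ξ) v hδ) hε⟩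
  · simp only [hcoeff]
    refine ⟨(hξ v).1, (hξ v).2.trans ?_⟩
    rw [mul_assoc kξ]
    exact ENNReal.ofReal_mul_le_ofReal_mul kξ (norm_nonneg v) hv
end
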